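/- arXiv:1904.00459 — 7 statements merged into one kernel-verified Lean document; each statement's English description precedes it below -/
import Mathlib

section
/- Let f and g be two probability densities on a measure space (X, F, μ), and let φ₁, φ₂ : X → [0,1] be measurable functions such that ∫ φ₁ f dμ ≥ ∫ φ₂ f dμ. Suppose there exists k ≥ 0 such that φ₁(x) ≥ φ₂(x) whenever g(x) ≥ k·f(x), and φ₁(x) ≤ φ₂(x) whenever g(x) < k·f(x). Then ∫ φ₁ g dμ ≥ ∫ φ₂ g dμ. -/
open MeasureTheory

theorem stmt_0 {X : Type*} [MeasurableSpace X] (μ : Measure X)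
    (f g φ₁ φ₂ : X → ℝ)
    (hfm : Measurable f) (hgm : Measurable g)
    (hf0 : ∀ x, 0 ≤ f x) (hg0 : ∀ x, 0 ≤ g x)
    (hfi : Integrable f μ) (hgi : Integrable g μ)
    (hf1 : ∫ x, f x ∂μ = 1) (hg1 : ∫ x, g x ∂μ = 1)
    (hφ₁m : Measurable φ₁) (hφ₂m : Measurable φ₂)
    (hφ₁ : ∀ x, φ₁ x ∈ Set.Icc (0 : ℝ) 1) (hφ₂ : ∀ x, φ₂ x ∈ Set.Icc (0 : ℝ) 1)
    (hint1f : Integrable (fun x => φ₁ x * f x) μ)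
    (hint2f : Integrable (fun x => φ₂ x * f x) μ)
    (hint1g : Integrable (fun x => φ₁ x * g x) μ)
    (hint2g : Integrable (fun x => φ₂ x * g x) μ)
    (hle : ∫ x, φ₂ x * f x ∂μ ≤ ∫ x, φ₁ x * f x ∂μ)
    (k : ℝ) (hk : 0 ≤ k)
    (h₁ : ∀ x, k * f x ≤ g x → φ₂ x ≤ φ₁ x)
    (h₂ : ∀ x, g x < k * f x → φ₁ x ≤ φ₂ x) :
    ∫ x, φ₂ x * g x ∂μ ≤ ∫ x, φ₁ x * g x ∂μ := by
  have hptw : ∀ x, 0 ≤ (φ₁ x - φ₂ x) * (g x - k * f x) := by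
    intro x
    rcases le_or_gt (k * f x) (g x) with h | h
    · exact mul_nonneg (sub_nonneg.2 (h₁ x h)) (sub_nonneg.2 h)
    · nlinarith [sub_nonpos.2 (h₂ x h), sub_nonpos.2 h.le]
  have hint : Integrable (fun x => (φ₁ x - φ₂ x) * (g x - k * f x)) μ := by
    have : (fun x => (φ₁ x - φ₂ x) * (g x - k * f x)) =
        fun x => (φ₁ x * g x - φ₂ x * g x) - k • (φ₁ x * f x - φ₂ x * f x) := by
      funext x; simp; ring
    rw [this]
    exact ((hint1g.sub hint2g).sub ((hint1f.sub hint2f).smul k))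
  have h0 : 0 ≤ ∫ x, (φ₁ x - φ₂ x) * (g x - k * f x) ∂μ :=
    integral_nonneg hptw
  have heq : ∫ x, (φ₁ x - φ₂ x) * (g x - k * f x) ∂μ =
      (∫ x, φ₁ x * g x ∂μ - ∫ x, φ₂ x * g x ∂μ) -
      k * (∫ x, φ₁ x * f x ∂μ - ∫ x, φ₂ x * f x ∂μ) := by
    have : (fun x => (φ₁ x - φ₂ x) * (g x - k * f x)) =
        fun x => (φ₁ x * g x - φ₂ x * g x) - k • (φ₁ x * f x - φ₂ x * f x) := by
      funext x; simp; ring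
    have hA : Integrable (fun x => φ₁ x * g x - φ₂ x * g x) μ := hint1g.sub hint2g
    have hB : Integrable (fun x => k • (φ₁ x * f x - φ₂ x * f x)) μ :=
      (hint1f.sub hint2f).smul k
    rw [this, integral_sub hA hB, integral_smul, integral_sub hint1g hint2g,
      integral_sub hint1f hint2f]
    simp
  rw [heq] at h0
  nlinarith [mul_nonneg hk (sub_nonneg.2 hle)]
end

section
/- Let 0 < b < 1, let L ~ DLap(b) and U ~ Uniform(−1/2, 1/2) be independent, and let N₀ = L + U + m for m ∈ ℝ. Then the cdf of N₀ satisfies F(x) = (b^{−[x−m]}/(1+b))·(b + (x − m − [x−m] + 1/2)(1−b)) for x ≤ [m], and F(x) = 1 − (b^{[x−m]}/(1+b))·(b + ([x−m] − (x−m) + 1/2)(1−b)) for x > [m], where [·] denotes the nearest integer function. -/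
lemma clamp_sub (t : ℝ) : max 0 (min 1 (1 - t)) = 1 - max 0 (min 1 t) := by
  rcases le_total t 0 with h | h
  · rw [min_eq_left (by linarith : (1:ℝ) ≤ 1 - t), max_eq_right zero_le_one,
      min_eq_right (by linarith : t ≤ (1:ℝ)), max_eq_left h]; ring
  · rcases le_total t 1 with h1 | h1
    · rw [min_eq_right (by linarith : 1 - t ≤ (1:ℝ)), max_eq_right (by linarith : (0:ℝ) ≤ 1 - t),
        min_eq_right h1, max_eq_right h]
    · rw [min_eq_right (by linarith : 1 - t ≤ (1:ℝ)), max_eq_left (by linarith : 1 - t ≤ (0:ℝ)),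
        min_eq_left h1, max_eq_right zero_le_one]; ring

lemma hasSumA (b : ℝ) (hb0 : 0 < b) (hb1 : b < 1) (k : ℤ) (hk : k ≤ 0) (y : ℝ)
    (h1 : (k : ℝ) - 1/2 ≤ y) (h2 : y ≤ (k : ℝ) + 1/2) :
    HasSum (fun l : ℤ => ((1 - b) / (1 + b)) * b ^ l.natAbs * max 0 (min 1 (y - l + 1/2)))
      (b ^ k.natAbs / (1 + b) * (b + (y - (k : ℝ) + 1/2) * (1 - b))) := by
  have hb1' : (0:ℝ) < 1 - b := by linarith
  have hbp : (0:ℝ) < 1 + b := by linarith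
  set c : ℝ := (1 - b) / (1 + b) with hc
  have hi : Function.Injective (fun n : ℕ => k - (n : ℤ)) := by
    intro a b h; simp only at h; omega
  rw [← hi.hasSum_iff]
  · have hg : HasSum (fun n : ℕ => c * b ^ k.natAbs * b ^ n)
        (c * b ^ k.natAbs * (1 - b)⁻¹) :=
      (hasSum_geometric_of_lt_one hb0.le hb1).mul_left _
    have hd : HasSum (fun n : ℕ => if n = 0 then c * b ^ k.natAbs * ((k:ℝ) - y + 1/2) else 0)
        (c * b ^ k.natAbs * ((k:ℝ) - y + 1/2)) := hasSum_ite_eq 0 _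
    have H := hg.sub hd
    have hfe : ((fun l : ℤ => c * b ^ l.natAbs * max 0 (min 1 (y - l + 1/2))) ∘
        (fun n : ℕ => k - (n : ℤ))) =
        fun n : ℕ => c * b ^ k.natAbs * b ^ n -
          (if n = 0 then c * b ^ k.natAbs * ((k:ℝ) - y + 1/2) else 0) := by
      funext n
      simp only [Function.comp_apply]
      have hna : (k - (n:ℤ)).natAbs = k.natAbs + n := by omega
      rw [hna, pow_add]
      rcases Nat.eq_zero_or_pos n with hn | hn
      · subst hn
        rw [if_pos rfl]
        push_cast
        rw [min_eq_right (by linarith), max_eq_right (by linarith)]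
        ring
      · rw [if_neg (by omega)]
        have hmin : min 1 (y - ((k - (n:ℤ) : ℤ) : ℝ) + 1/2) = 1 := by
          apply min_eq_left
          push_cast
          have : (1:ℝ) ≤ (n:ℝ) := by exact_mod_cast hn
          linarith
        rw [hmin, max_eq_right zero_le_one]
        ring
    have hval : b ^ k.natAbs / (1 + b) * (b + (y - (k : ℝ) + 1/2) * (1 - b)) =
        c * b ^ k.natAbs * (1 - b)⁻¹ - c * b ^ k.natAbs * ((k:ℝ) - y + 1/2) := by
      rw [hc]; field_simp; ring
    rw [hfe, hval]
    exact H
  · intro l hl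
    have hlk : k + 1 ≤ l := by
      by_contra hcon
      exact hl ⟨(k - l).toNat, by show k - ((k - l).toNat : ℤ) = l; omega⟩
    have hle : min 1 (y - l + 1/2) ≤ 0 := by
      apply le_trans (min_le_right _ _)
      have : ((k:ℝ) + 1) ≤ (l:ℝ) := by exact_mod_cast hlk
      linarith
    rw [max_eq_left hle, mul_zero]

set_option maxHeartbeats 800000 in
lemma hasSumT (b : ℝ) (hb0 : 0 < b) (hb1 : b < 1) :
    HasSum (fun l : ℤ => ((1 - b) / (1 + b)) * b ^ l.natAbs) 1 := by
  have hb1' : (0:ℝ) < 1 - b := by linarith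
  have hbp : (0:ℝ) < 1 + b := by linarith
  set c : ℝ := (1 - b) / (1 + b) with hc
  have hg : HasSum (fun n : ℕ => c * b ^ ((n:ℤ)).natAbs) (c * (1 - b)⁻¹) := by
    refine ((hasSum_geometric_of_lt_one hb0.le hb1).mul_left c).congr_fun fun n => ?_
    simp
  have hg2 : HasSum (fun n : ℕ => c * b ^ (-((n:ℤ) + 1)).natAbs) (c * b * (1 - b)⁻¹) := by
    have hh := (hasSum_geometric_of_lt_one hb0.le hb1).mul_left (c * b)
    refine hh.congr_fun fun n => ?_
    have hna : (-((n:ℤ) + 1)).natAbs = n + 1 := by omega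
    rw [hna, pow_succ]
    ring
  have H : HasSum (fun l : ℤ => c * b ^ l.natAbs) (c * (1 - b)⁻¹ + c * b * (1 - b)⁻¹) :=
    HasSum.of_nat_of_neg_add_one (f := fun l : ℤ => c * b ^ l.natAbs) hg hg2
  have hval : (1:ℝ) = c * (1 - b)⁻¹ + c * b * (1 - b)⁻¹ := by
    rw [hc]; field_simp
  rw [hval]
  exact H

lemma hasSumB (b : ℝ) (hb0 : 0 < b) (hb1 : b < 1) (k : ℤ) (hk : 0 ≤ k) (y : ℝ)
    (h1 : (k : ℝ) - 1/2 ≤ y) (h2 : y ≤ (k : ℝ) + 1/2) :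
    HasSum (fun l : ℤ => ((1 - b) / (1 + b)) * b ^ l.natAbs * max 0 (min 1 (y - l + 1/2)))
      (1 - b ^ k.natAbs / (1 + b) * (b + ((k : ℝ) - y + 1/2) * (1 - b))) := by
  set c : ℝ := (1 - b) / (1 + b) with hc
  have hA := hasSumA b hb0 hb1 (-k) (by omega) (-y)
    (by push_cast; linarith) (by push_cast; linarith)
  have H := (hasSumT b hb0 hb1).sub hA
  have H2 := ((Equiv.neg ℤ).hasSum_iff).mpr H
  have hfe : ((fun l : ℤ => c * b ^ l.natAbs -
      c * b ^ l.natAbs * max 0 (min 1 (-y - l + 1/2))) ∘ (Equiv.neg ℤ)) =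
      fun l : ℤ => c * b ^ l.natAbs * max 0 (min 1 (y - l + 1/2)) := by
    funext l
    simp only [Function.comp_apply, Equiv.neg_apply, Int.natAbs_neg, Int.cast_neg]
    have ht : (-y : ℝ) - (-(l:ℝ)) + 1/2 = 1 - (y - l + 1/2) := by ring
    rw [ht, clamp_sub]
    ring
  rw [hfe] at H2
  have hval : 1 - b ^ k.natAbs / (1 + b) * (b + ((k : ℝ) - y + 1/2) * (1 - b)) =
      1 - b ^ (-k).natAbs / (1 + b) * (b + (-y - ((-k : ℤ) : ℝ) + 1/2) * (1 - b)) := by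
    rw [show (-k).natAbs = k.natAbs by omega]
    push_cast
    ring
  rw [hval]
  exact H2

theorem stmt_4 (b m : ℝ) (hb0 : 0 < b) (hb1 : b < 1)
    (nint : ℝ → ℤ) (hnint : ∀ t : ℝ, |t - nint t| ≤ 1 / 2)
    (F : ℝ → ℝ)
    (hF : ∀ x : ℝ, F x = ∑' l : ℤ,
      ((1 - b) / (1 + b)) * b ^ l.natAbs * max 0 (min 1 (x - m - l + 1 / 2))) :
    ∀ x : ℝ,
      (x ≤ (nint m : ℝ) →
        F x = (b ^ (-(nint (x - m))) / (1 + b)) *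
          (b + (x - m - (nint (x - m) : ℝ) + 1 / 2) * (1 - b))) ∧
      ((nint m : ℝ) < x →
        F x = 1 - (b ^ (nint (x - m)) / (1 + b)) *
          (b + ((nint (x - m) : ℝ) - (x - m) + 1 / 2) * (1 - b))) := by
  intro x
  set y : ℝ := x - m with hy
  set k : ℤ := nint y with hk
  have hyk := hnint y
  rw [abs_le] at hyk
  have hky1 : (k : ℝ) - 1/2 ≤ y := by linarith [hyk.2]
  have hky2 : y ≤ (k : ℝ) + 1/2 := by linarith [hyk.1]
  have hmm := hnint m
  rw [abs_le] at hmm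
  have hbne : b ≠ 0 := ne_of_gt hb0
  have hbp : (0:ℝ) < 1 + b := by linarith
  constructor
  · intro hx
    have hyle : y ≤ 1/2 := by
      have : (nint m : ℝ) ≤ m + 1/2 := by linarith [hmm.1]
      simp only [hy]; linarith
    have hkle : k ≤ 1 := by
      by_contra hcon
      push_neg at hcon
      have h2 : (2:ℤ) ≤ k := hcon
      have : (2:ℝ) ≤ (k:ℝ) := by exact_mod_cast h2
      linarith
    rcases lt_or_eq_of_le hkle with hk0 | hk1
    · have hk0' : k ≤ 0 := by omega
      have hS := hasSumA b hb0 hb1 k hk0' y hky1 hky2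
      rw [hF x, hS.tsum_eq]
      have hz : b ^ (-k) = b ^ k.natAbs := by
        rw [← zpow_natCast b k.natAbs]
        congr 1
        omega
      rw [hz]
    · have hyeq : y = 1/2 := by
        have h1 : ((1:ℤ) : ℝ) - 1/2 ≤ y := by rw [← hk1]; exact hky1
        push_cast at h1
        linarith
      have hS := hasSumA b hb0 hb1 0 le_rfl y (by rw [hyeq]; norm_num)
        (by rw [hyeq]; norm_num)
      rw [hF x, hS.tsum_eq, hk1, hyeq]
      simp only [Int.natAbs_zero, pow_zero, Int.cast_zero, Int.cast_one]
      rw [zpow_neg, zpow_one]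
      field_simp
      ring
  · intro hx
    have hygt : -(1/2) < y := by
      have : m - 1/2 ≤ (nint m : ℝ) := by linarith [hmm.2]
      simp only [hy]; linarith
    have hkge : 0 ≤ k := by
      by_contra hcon
      push_neg at hcon
      have h1 : k ≤ -1 := by omega
      have : (k:ℝ) ≤ -1 := by exact_mod_cast h1
      linarith
    have hS := hasSumB b hb0 hb1 k hkge y hky1 hky2
    rw [hF x, hS.tsum_eq]
    have hz : b ^ k = b ^ k.natAbs := by
      rw [← zpow_natCast b k.natAbs]
      congr 1
      omega
    rw [hz]
end

section
/- Define C(m) = (1+b)^{−1} b^{[m]} (b + ([m] − m + 1/2)(1−b)) for m ∈ ℝ and b ∈ (0,1), where [·] is the nearest integer function. Then C is positive, continuous, and monotone decreasing in m, and satisfies the identity b^{−[m]} C(m) = 1 − b^{[m]} C(−m) for all m ∈ ℝ. -/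
/-!
Replacing `[m]` by any integer `n` with `|m - n| ≤ 1/2` does not change `C(m)`: the only freedom is
at half-integers `m = n + 1/2`, where both `n` and `n + 1` give `b^(n+1) / (1 + b)`. Hence on each
interval `[n - 1/2, n + 1/2]` the function `C` is the decreasing affine function
`m ↦ b^n (b + (n - m + 1/2)(1 - b)) / (1 + b)`, with values between `b^(n+1) / (1 + b)` and
`b^n / (1 + b)`; these pieces glue to a positive, continuous, decreasing function. For the identity,
`-[m]` may serve as the nearest integer to `-m`, and then the two sides agree by algebra.
-/

open Set Filter

/-- `(1 + b) C(m)` with the nearest integer `[m]` replaced by an arbitrary integer `n`. -/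
noncomputable def cTerm (b : ℝ) (n : ℤ) (m : ℝ) : ℝ :=
  b ^ n * (b + (n - m + 1 / 2) * (1 - b))

section cTerm

variable {b : ℝ}

lemma cTerm_succ_half (hb : b ≠ 0) (n : ℤ) :
    cTerm b (n + 1) (n + 1 / 2) = cTerm b n (n + 1 / 2) := by
  simp only [cTerm, zpow_add_one₀ hb]
  push_cast
  ring

lemma cTerm_eq_of_abs_sub_le (hb : b ≠ 0) {m : ℝ} {n n' : ℤ}
    (hn : |m - n| ≤ 1 / 2) (hn' : |m - n'| ≤ 1 / 2) : cTerm b n m = cTerm b n' m := by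
  rw [abs_le] at hn hn'
  have hcases : n' = n ∨ n' = n + 1 ∨ n = n' + 1 := by
    have : |n' - n| ≤ 1 := by
      exact_mod_cast (abs_le.2 ⟨by linarith, by linarith⟩ : |(n' : ℝ) - n| ≤ 1)
    rw [abs_le] at this
    omega
  rcases hcases with rfl | rfl | rfl
  · rfl
  · obtain rfl : m = n + 1 / 2 := by push_cast at hn'; linarith
    exact (cTerm_succ_half hb n).symm
  · obtain rfl : m = n' + 1 / 2 := by push_cast at hn; linarith
    exact cTerm_succ_half hb n'

lemma zpow_succ_le_cTerm (hb0 : 0 < b) (hb1 : b ≤ 1) {m : ℝ} {n : ℤ} (h : m ≤ n + 1 / 2) :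
    b ^ (n + 1) ≤ cTerm b n m := by
  rw [cTerm, zpow_add_one₀ hb0.ne']
  gcongr
  nlinarith

lemma cTerm_le_zpow (hb0 : 0 ≤ b) (hb1 : b ≤ 1) {m : ℝ} {n : ℤ} (h : n - 1 / 2 ≤ m) :
    cTerm b n m ≤ b ^ n := by
  rw [cTerm]
  refine mul_le_of_le_one_right (zpow_nonneg hb0 n) ?_
  nlinarith

lemma cTerm_pos (hb0 : 0 < b) (hb1 : b ≤ 1) {m : ℝ} {n : ℤ} (h : |m - n| ≤ 1 / 2) :
    0 < cTerm b n m :=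
  (zpow_pos hb0 _).trans_le (zpow_succ_le_cTerm hb0 hb1 (by linarith [(abs_le.1 h).2]))

lemma antitone_cTerm (hb0 : 0 ≤ b) (hb1 : b ≤ 1) (n : ℤ) : Antitone (cTerm b n) := by
  intro m m' h
  unfold cTerm
  gcongr

lemma continuous_cTerm (b : ℝ) (n : ℤ) : Continuous (cTerm b n) := by
  unfold cTerm
  fun_prop

lemma zpow_neg_mul_cTerm_add (hb : b ≠ 0) (n : ℤ) (m : ℝ) :
    b ^ (-n) * cTerm b n m + b ^ n * cTerm b (-n) (-m) = 1 + b := by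
  simp only [cTerm, ← mul_assoc, ← zpow_add₀ hb, neg_add_cancel, add_neg_cancel, zpow_zero]
  push_cast
  ring

lemma cTerm_le_cTerm_of_le (hb0 : 0 < b) (hb1 : b ≤ 1) {m m' : ℝ} {n n' : ℤ}
    (hn : |m - n| ≤ 1 / 2) (hn' : |m' - n'| ≤ 1 / 2) (h : m ≤ m') :
    cTerm b n' m' ≤ cTerm b n m := by
  rw [abs_le] at hn hn'
  rcases lt_or_ge n n' with hlt | hge
  · calc cTerm b n' m' ≤ b ^ n' := cTerm_le_zpow hb0.le hb1 (by linarith)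
      _ ≤ b ^ (n + 1) := zpow_le_zpow_right_of_le_one₀ hb0 hb1 hlt
      _ ≤ cTerm b n m := zpow_succ_le_cTerm hb0 hb1 (by linarith)
  · have hn'' : |m' - n| ≤ 1 / 2 := by
      have : (n' : ℝ) ≤ n := by exact_mod_cast hge
      exact abs_le.2 ⟨by linarith, by linarith⟩
    rw [cTerm_eq_of_abs_sub_le hb0.ne' (abs_le.2 hn') hn'']
    exact antitone_cTerm hb0.le hb1 n h

end cTerm

lemma continuous_of_eq_of_abs_sub_le {Y : Type*} [TopologicalSpace Y] {f : ℝ → Y}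
    {g : ℤ → ℝ → Y} (hg : ∀ n, Continuous (g n))
    (hf : ∀ (m : ℝ) (n : ℤ), |m - n| ≤ 1 / 2 → f m = g n m) : Continuous f := by
  have hfin : LocallyFinite fun n : ℤ => Icc ((n : ℝ) - 1 / 2) (n + 1 / 2) :=
    locallyFinite_Icc_of_tendsto (tendsto_atTop_add_const_right _ _ tendsto_intCast_atTop_atTop)
      (tendsto_atBot_add_const_right _ _ (tendsto_intCast_atBot_iff.2 tendsto_id))
  refine hfin.continuous (eq_univ_of_forall fun m => mem_iUnion.2 ⟨round m, ?_⟩)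
    (fun _ => isClosed_Icc) fun n => (hg n).continuousOn.congr fun m hm => hf m n ?_
  · obtain ⟨h₁, h₂⟩ := abs_le.1 (abs_sub_round m)
    exact ⟨by linarith, by linarith⟩
  · exact abs_le.2 ⟨by linarith [hm.1], by linarith [hm.2]⟩

theorem stmt_6 (b : ℝ) (hb0 : 0 < b) (hb1 : b < 1)
    (nint : ℝ → ℤ) (hnint : ∀ t : ℝ, |t - nint t| ≤ 1 / 2)
    (C : ℝ → ℝ)
    (hC : ∀ m : ℝ, C m = (1 + b)⁻¹ * b ^ (nint m) *
      (b + ((nint m : ℝ) - m + 1 / 2) * (1 - b))) :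
    (∀ m : ℝ, 0 < C m) ∧ Continuous C ∧ Antitone C ∧
    ∀ m : ℝ, b ^ (-(nint m)) * C m = 1 - b ^ (nint m) * C (-m) := by
  have hCn : ∀ (m : ℝ) (n : ℤ), |m - n| ≤ 1 / 2 → C m = (1 + b)⁻¹ * cTerm b n m := by
    intro m n hn
    rw [hC m, mul_assoc, cTerm_eq_of_abs_sub_le hb0.ne' hn (hnint m), cTerm]
  refine ⟨fun m => ?_, ?_, fun m m' h => ?_, fun m => ?_⟩
  · rw [hCn m _ (hnint m)]
    exact mul_pos (by positivity) (cTerm_pos hb0 hb1.le (hnint m))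
  · exact continuous_of_eq_of_abs_sub_le (fun n => continuous_const.mul (continuous_cTerm b n)) hCn
  · rw [hCn m _ (hnint m), hCn m' _ (hnint m')]
    exact mul_le_mul_of_nonneg_left (cTerm_le_cTerm_of_le hb0 hb1.le (hnint m) (hnint m') h)
      (by positivity)
  · have hneg : |-m - ((-nint m : ℤ) : ℝ)| ≤ 1 / 2 := by
      rw [← abs_neg]
      convert hnint m using 2
      push_cast
      ring
    rw [hCn m _ (hnint m), hCn (-m) _ hneg]
    have := zpow_neg_mul_cTerm_add hb0.ne' (nint m) m
    field_simp
    linarith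
end

section
/- Let N₀ ~ Tulap(0, b, 0) with b = e^{−ε}, ε > 0, and let F denote its cdf. For any m ∈ ℝ and any integer t, the value F(t+1 − m) equals e^ε F(t − m) if F(t − m) ≤ 1/(1 + e^ε), and equals 1 − e^{−ε}(1 − F(t − m)) if F(t − m) > 1/(1 + e^ε). In other words, F(t+1 − m) = min{ e^ε F(t − m), 1 − e^{−ε}(1 − F(t − m)) }. -/
lemma hasSum_geom_int {b : ℝ} (hb0 : 0 ≤ b) (hb1 : b < 1) :
    HasSum (fun l : ℤ => b ^ l.natAbs) ((1 + b) / (1 - b)) := by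
  have hbne : (1 : ℝ) - b ≠ 0 := by linarith
  have h1 : HasSum (fun n : ℕ => b ^ ((n : ℤ).natAbs)) (1 - b)⁻¹ := by
    simpa using hasSum_geometric_of_lt_one hb0 hb1
  have h2 : HasSum (fun n : ℕ => b ^ ((-(n + 1) : ℤ)).natAbs) (b * (1 - b)⁻¹) := by
    have hfe : (fun n : ℕ => b ^ ((-(n + 1) : ℤ)).natAbs) = fun n : ℕ => b * b ^ n := by
      funext n
      have h : ((-((n : ℤ) + 1)).natAbs) = n + 1 := by omega
      rw [h, pow_succ]; ring
    rw [hfe]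
    exact (hasSum_geometric_of_lt_one hb0 hb1).mul_left b
  have h3 : HasSum (fun l : ℤ => b ^ l.natAbs) ((1 - b)⁻¹ + b * (1 - b)⁻¹) :=
    HasSum.of_nat_of_neg_add_one h1 h2
  have heq : (1 - b)⁻¹ + b * (1 - b)⁻¹ = (1 + b) / (1 - b) := by field_simp
  rwa [heq] at h3

lemma g_nonneg (y : ℝ) : 0 ≤ max 0 (min 1 (y + 1 / 2)) := le_max_left _ _

lemma g_le_one (y : ℝ) : max 0 (min 1 (y + 1 / 2)) ≤ 1 :=
  max_le zero_le_one (min_le_left _ _)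

lemma g_eq_zero {y : ℝ} (h : y ≤ -(1 / 2)) : max 0 (min 1 (y + 1 / 2)) = 0 :=
  max_eq_left ((min_le_right _ _).trans (by linarith))

lemma g_eq_one {y : ℝ} (h : 1 / 2 ≤ y) : max 0 (min 1 (y + 1 / 2)) = 1 := by
  rw [min_eq_left (by linarith), max_eq_right zero_le_one]

lemma tulap_key {b : ℝ} (hb0 : 0 < b) (hb1 : b < 1) (G : ℝ → ℝ)
    (hG : ∀ y : ℝ, G y = ∑' l : ℤ,
      (1 - b) / (1 + b) * b ^ l.natAbs * max 0 (min 1 (y - ↑l + 1 / 2)))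
    (x : ℝ) :
    G (x + 1) = min (b⁻¹ * G x) (1 - b * (1 - G x)) := by
  set c : ℝ := (1 - b) / (1 + b) with hc_def
  have hb1' : (0:ℝ) < 1 - b := by linarith
  have hbp : (0:ℝ) < 1 + b := by linarith
  have hc : 0 < c := div_pos hb1' hbp
  have hbb : b * b⁻¹ = 1 := mul_inv_cancel₀ (ne_of_gt hb0)
  have hSg : Summable (fun l : ℤ => b ^ l.natAbs) := (hasSum_geom_int hb0.le hb1).summable
  have hco : ((fun l : ℤ => b ^ l.natAbs) ∘ (Equiv.addRight (1:ℤ))) =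
      fun l : ℤ => b ^ (l + 1).natAbs := by
    funext l; simp
  have hSg' : Summable (fun l : ℤ => b ^ (l + 1).natAbs) := by
    rw [← hco]
    exact ((Equiv.addRight (1:ℤ)).summable_iff (f := fun l : ℤ => b ^ l.natAbs)).mpr hSg
  -- summability of the main terms
  have hsum1 : ∀ y : ℝ, Summable (fun l : ℤ => c * b ^ l.natAbs * max 0 (min 1 (y - ↑l + 1 / 2))) := by
    intro y
    refine Summable.of_nonneg_of_le (fun l => ?_) (fun l => ?_) (hSg.mul_left c)
    · positivity
    · exact mul_le_of_le_one_right (by positivity) (g_le_one _)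
  have hsum2 : ∀ y : ℝ, Summable (fun l : ℤ => c * b ^ (l + 1).natAbs * max 0 (min 1 (y - ↑l + 1 / 2))) := by
    intro y
    refine Summable.of_nonneg_of_le (fun l => ?_) (fun l => ?_) (hSg'.mul_left c)
    · positivity
    · exact mul_le_of_le_one_right (by positivity) (g_le_one _)
  have hsum1' : ∀ y : ℝ, Summable (fun l : ℤ => c * b ^ l.natAbs * (1 - max 0 (min 1 (y - ↑l + 1 / 2)))) := by
    intro y
    refine Summable.of_nonneg_of_le (fun l => ?_) (fun l => ?_) (hSg.mul_left c)
    · exact mul_nonneg (by positivity) (by have := g_le_one (y - (l:ℝ)); linarith)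
    · exact mul_le_of_le_one_right (by positivity) (by have := g_nonneg (y - (l:ℝ)); linarith)
  have hsum2' : ∀ y : ℝ, Summable (fun l : ℤ => c * b ^ (l + 1).natAbs * (1 - max 0 (min 1 (y - ↑l + 1 / 2)))) := by
    intro y
    refine Summable.of_nonneg_of_le (fun l => ?_) (fun l => ?_) (hSg'.mul_left c)
    · exact mul_nonneg (by positivity) (by have := g_le_one (y - (l:ℝ)); linarith)
    · exact mul_le_of_le_one_right (by positivity) (by have := g_nonneg (y - (l:ℝ)); linarith)
  -- total mass
  have hT : ∑' l : ℤ, c * b ^ l.natAbs = 1 := by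
    rw [tsum_mul_left, (hasSum_geom_int hb0.le hb1).tsum_eq, hc_def]
    field_simp
  have hT' : ∑' l : ℤ, c * b ^ (l + 1).natAbs = 1 := by
    rw [← hT]
    exact ((Equiv.addRight (1:ℤ)).tsum_eq (fun l : ℤ => c * b ^ l.natAbs))
  -- reindexing of G (x+1)
  have hre : G (x + 1) = ∑' l : ℤ, c * b ^ (l + 1).natAbs * max 0 (min 1 (x - ↑l + 1 / 2)) := by
    rw [hG]
    rw [← ((Equiv.addRight (1:ℤ)).tsum_eq
      (fun l : ℤ => c * b ^ l.natAbs * max 0 (min 1 (x + 1 - ↑l + 1 / 2))))]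
    apply tsum_congr
    intro l
    have : x + 1 - ((l : ℝ) + 1) = x - l := by ring
    simp only [Equiv.coe_addRight]
    push_cast
    rw [this]
  -- Part A : e^ε G x - G (x+1) as a nonnegative series
  have hA : b⁻¹ * G x - G (x + 1) =
      ∑' l : ℤ, (b⁻¹ * (c * b ^ l.natAbs) - c * b ^ (l + 1).natAbs) *
        max 0 (min 1 (x - ↑l + 1 / 2)) := by
    rw [hG x, hre, ← tsum_mul_left,
      ← Summable.tsum_sub ((hsum1 x).mul_left b⁻¹) (hsum2 x)]
    exact tsum_congr fun l => by ring
  have hcoefA0 : ∀ l : ℤ, l < 0 →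
      b⁻¹ * (c * b ^ l.natAbs) - c * b ^ (l + 1).natAbs = 0 := by
    intro l hl
    have hn : l.natAbs = (l + 1).natAbs + 1 := by omega
    rw [hn, pow_succ]
    field_simp
    ring
  have hcoefApos : ∀ l : ℤ,
      0 ≤ b⁻¹ * (c * b ^ l.natAbs) - c * b ^ (l + 1).natAbs := by
    intro l
    rcases lt_or_ge l 0 with hl | hl
    · rw [hcoefA0 l hl]
    · have hn : (l + 1).natAbs = l.natAbs + 1 := by omega
      rw [hn, pow_succ]
      have hble : b ≤ b⁻¹ := by nlinarith
      have hB : 0 ≤ b ^ l.natAbs := pow_nonneg hb0.le _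
      nlinarith [mul_nonneg (mul_nonneg hc.le hB) (sub_nonneg.mpr hble)]
  have hA_nonneg : 0 ≤ b⁻¹ * G x - G (x + 1) := by
    rw [hA]
    exact tsum_nonneg fun l => mul_nonneg (hcoefApos l) (g_nonneg _)
  have hA_zero : x ≤ -(1 / 2) → b⁻¹ * G x - G (x + 1) = 0 := by
    intro hx
    have hterm : ∀ l : ℤ, (b⁻¹ * (c * b ^ l.natAbs) - c * b ^ (l + 1).natAbs) *
        max 0 (min 1 (x - ↑l + 1 / 2)) = 0 := by
      intro l
      rcases lt_or_ge l 0 with hl | hl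
      · rw [hcoefA0 l hl, zero_mul]
      · have hl' : (0:ℝ) ≤ (l:ℝ) := by exact_mod_cast hl
        rw [g_eq_zero (by linarith), mul_zero]
    rw [hA]
    exact (tsum_congr hterm).trans tsum_zero
  -- Part B
  have hsum3 : Summable (fun l : ℤ =>
      c * b ^ (l.natAbs + 1) * (1 - max 0 (min 1 (x - ↑l + 1 / 2)))) :=
    ((hsum1' x).mul_left b).congr fun l => by rw [pow_succ]; ring
  have h1 : ∑' l : ℤ, c * b ^ (l + 1).natAbs * (1 - max 0 (min 1 (x - ↑l + 1 / 2)))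
      = 1 - G (x + 1) := by
    calc ∑' l : ℤ, c * b ^ (l + 1).natAbs * (1 - max 0 (min 1 (x - ↑l + 1 / 2)))
        = ∑' l : ℤ, (c * b ^ (l + 1).natAbs
            - c * b ^ (l + 1).natAbs * max 0 (min 1 (x - ↑l + 1 / 2))) :=
          tsum_congr fun l => by ring
      _ = (∑' l : ℤ, c * b ^ (l + 1).natAbs)
            - ∑' l : ℤ, c * b ^ (l + 1).natAbs * max 0 (min 1 (x - ↑l + 1 / 2)) :=
          Summable.tsum_sub (hSg'.mul_left c) (hsum2 x)
      _ = 1 - G (x + 1) := by rw [hT', hre]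
  have h2 : ∑' l : ℤ, c * b ^ (l.natAbs + 1) * (1 - max 0 (min 1 (x - ↑l + 1 / 2)))
      = b - b * G x := by
    calc ∑' l : ℤ, c * b ^ (l.natAbs + 1) * (1 - max 0 (min 1 (x - ↑l + 1 / 2)))
        = ∑' l : ℤ, b * (c * b ^ l.natAbs * (1 - max 0 (min 1 (x - ↑l + 1 / 2)))) :=
          tsum_congr fun l => by rw [pow_succ]; ring
      _ = b * ∑' l : ℤ, c * b ^ l.natAbs * (1 - max 0 (min 1 (x - ↑l + 1 / 2))) :=
          tsum_mul_left
      _ = b * ∑' l : ℤ, (c * b ^ l.natAbs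
            - c * b ^ l.natAbs * max 0 (min 1 (x - ↑l + 1 / 2))) := by
          congr 1
          exact tsum_congr fun l => by ring
      _ = b * ((∑' l : ℤ, c * b ^ l.natAbs)
            - ∑' l : ℤ, c * b ^ l.natAbs * max 0 (min 1 (x - ↑l + 1 / 2))) := by
          rw [Summable.tsum_sub (hSg.mul_left c) (hsum1 x)]
      _ = b - b * G x := by rw [hT, ← hG x]; ring
  have hB : (1 - b * (1 - G x)) - G (x + 1) =
      ∑' l : ℤ, (c * b ^ (l + 1).natAbs - c * b ^ (l.natAbs + 1)) *
        (1 - max 0 (min 1 (x - ↑l + 1 / 2))) := by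
    calc (1 - b * (1 - G x)) - G (x + 1)
        = (1 - G (x + 1)) - (b - b * G x) := by ring
      _ = (∑' l : ℤ, c * b ^ (l + 1).natAbs * (1 - max 0 (min 1 (x - ↑l + 1 / 2))))
          - ∑' l : ℤ, c * b ^ (l.natAbs + 1) * (1 - max 0 (min 1 (x - ↑l + 1 / 2))) := by
          rw [h1, h2]
      _ = ∑' l : ℤ, (c * b ^ (l + 1).natAbs * (1 - max 0 (min 1 (x - ↑l + 1 / 2)))
          - c * b ^ (l.natAbs + 1) * (1 - max 0 (min 1 (x - ↑l + 1 / 2)))) :=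
          (Summable.tsum_sub (hsum2' x) hsum3).symm
      _ = ∑' l : ℤ, (c * b ^ (l + 1).natAbs - c * b ^ (l.natAbs + 1)) *
          (1 - max 0 (min 1 (x - ↑l + 1 / 2))) := tsum_congr fun l => by ring
  have hcoefB0 : ∀ l : ℤ, 0 ≤ l →
      c * b ^ (l + 1).natAbs - c * b ^ (l.natAbs + 1) = 0 := by
    intro l hl
    have hn : (l + 1).natAbs = l.natAbs + 1 := by omega
    rw [hn, sub_self]
  have hcoefBpos : ∀ l : ℤ,
      0 ≤ c * b ^ (l + 1).natAbs - c * b ^ (l.natAbs + 1) := by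
    intro l
    rcases le_or_gt 0 l with hl | hl
    · rw [hcoefB0 l hl]
    · have hn : l.natAbs = (l + 1).natAbs + 1 := by omega
      rw [hn]
      have hB : 0 ≤ b ^ (l + 1).natAbs := pow_nonneg hb0.le _
      have : c * b ^ ((l + 1).natAbs + 1 + 1) ≤ c * b ^ (l + 1).natAbs := by
        rw [pow_succ, pow_succ]
        have h1b : b * b ≤ 1 := by nlinarith
        nlinarith [mul_nonneg (mul_nonneg hc.le hB) (sub_nonneg.mpr h1b)]
      linarith
  have hB_nonneg : 0 ≤ (1 - b * (1 - G x)) - G (x + 1) := by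
    rw [hB]
    refine tsum_nonneg fun l => mul_nonneg (hcoefBpos l) ?_
    have := g_le_one (x - (l:ℝ)); linarith
  have hB_zero : -(1 / 2) ≤ x → (1 - b * (1 - G x)) - G (x + 1) = 0 := by
    intro hx
    have hterm : ∀ l : ℤ, (c * b ^ (l + 1).natAbs - c * b ^ (l.natAbs + 1)) *
        (1 - max 0 (min 1 (x - ↑l + 1 / 2))) = 0 := by
      intro l
      rcases le_or_gt 0 l with hl | hl
      · rw [hcoefB0 l hl, zero_mul]
      · have hl1 : l ≤ -1 := by omega
        have hl' : (l:ℝ) ≤ -1 := by exact_mod_cast hl1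
        rw [g_eq_one (by linarith : (1:ℝ)/2 ≤ x - l)]
        ring
    rw [hB]
    exact (tsum_congr hterm).trans tsum_zero
  -- conclude
  rcases le_total x (-(1 / 2)) with hx | hx
  · have h0 := hA_zero hx
    rw [min_eq_left (by linarith [hB_nonneg])]
    linarith
  · have h0 := hB_zero hx
    rw [min_eq_right (by linarith [hA_nonneg])]
    linarith


theorem stmt_7 (ε : ℝ) (hε : 0 < ε) (F : ℝ → ℝ)
    (hF : ∀ x : ℝ, F x = ∑' l : ℤ,
      ((1 - Real.exp (-ε)) / (1 + Real.exp (-ε))) * Real.exp (-ε) ^ l.natAbs *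
        max 0 (min 1 (x - l + 1 / 2))) :
    ∀ (m : ℝ) (t : ℤ),
      (F ((t : ℝ) - m) ≤ 1 / (1 + Real.exp ε) →
        F ((t : ℝ) + 1 - m) = Real.exp ε * F ((t : ℝ) - m)) ∧
      (1 / (1 + Real.exp ε) < F ((t : ℝ) - m) →
        F ((t : ℝ) + 1 - m) = 1 - Real.exp (-ε) * (1 - F ((t : ℝ) - m))) ∧
      F ((t : ℝ) + 1 - m) =
        min (Real.exp ε * F ((t : ℝ) - m))
          (1 - Real.exp (-ε) * (1 - F ((t : ℝ) - m))) := by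
  intro m t
  have hb0 : 0 < Real.exp (-ε) := Real.exp_pos _
  have hb1 : Real.exp (-ε) < 1 := by
    rw [← Real.exp_zero]
    exact Real.exp_lt_exp.mpr (by linarith)
  have hkey := tulap_key hb0 hb1 F hF ((t : ℝ) - m)
  have hx1 : (t : ℝ) + 1 - m = ((t : ℝ) - m) + 1 := by ring
  have hinv : (Real.exp (-ε))⁻¹ = Real.exp ε := by rw [Real.exp_neg, inv_inv]
  rw [hx1, hkey, hinv]
  set E := Real.exp ε with hE_def
  set B := Real.exp (-ε) with hB_def
  set y := F ((t : ℝ) - m) with hy_def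
  have hE1 : 1 < E := by
    rw [hE_def, ← Real.exp_zero]
    exact Real.exp_lt_exp.mpr hε
  have hEB : E * B = 1 := by
    rw [hE_def, hB_def, ← Real.exp_add]
    simp
  have hEp : (0:ℝ) < 1 + E := by linarith
  refine ⟨fun h => ?_, fun h => ?_, rfl⟩
  · have hy : y * (1 + E) ≤ 1 := by
      rw [← le_div_iff₀ hEp]; exact h
    refine min_eq_left ?_
    nlinarith [mul_le_mul_of_nonneg_right hy (by nlinarith : (0:ℝ) ≤ 1 - B)]
  · have hy : 1 < y * (1 + E) := by
      rw [← div_lt_iff₀ hEp]; exact h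
    refine min_eq_right ?_
    nlinarith [mul_le_mul_of_nonneg_right hy.le (by nlinarith : (0:ℝ) ≤ 1 - B)]
end

section
/- Let ε > 0, b = e^{−ε}, n ≥ 1, and 0 ≤ θ₀ < θ₁ ≤ 1. Let X ~ Binom(n, θ). Define φ*(x) = F₀(x − m) where F₀ is the cdf of Tulap(0, b, 0) and m is chosen so that E_{θ₀} φ*(X) = α ∈ (0,1). Then for every test φ : {0,…,n} → [0,1] satisfying the (ε,0)-DP constraints (φ(x) ≤ e^ε φ(x−1), φ(x−1) ≤ e^ε φ(x), 1−φ(x) ≤ e^ε(1−φ(x−1)), 1−φ(x−1) ≤ e^ε(1−φ(x)) for all x ∈ {1,…,n}) with E_{θ₀} φ(X) ≤ α, we have E_{θ₁} φ*(X) ≥ E_{θ₁} φ(X). -/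
/-!
With `b = e^{-ε}`, the Tulap cdf `F₀` satisfies `b F₀(t+1) = F₀(t)` for `t ≤ -1/2` and, by the
symmetry `F₀(-t) = 1 - F₀(t)`, `b (1 - F₀(t)) = 1 - F₀(t+1)` for `t ≥ -1/2`: at every step `φ*`
makes one of the DP constraints tight. Hence once a DP test `φ` falls below `φ*` it stays below,
so `φ - φ*` changes sign at most once, from `+` to `-`. As the binomial family has monotone
likelihood ratio, such a function with nonpositive mean under `θ₀` has nonpositive mean under any
`θ₁ > θ₀` (the Karlin–Rubin argument).
-/

open Finset

/-- `P(L + U ≤ t) = ∑ₗ P(L = l) P(U ≤ t - l)` for `L ~ DLap(b)`, `U ~ Unif(-1/2, 1/2)`. -/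
noncomputable def tulapCdf (b t : ℝ) : ℝ :=
  ∑' l : ℤ, (1 - b) / (1 + b) * b ^ l.natAbs * max 0 (min 1 (t - l + 1 / 2))

section Tulap

variable {b : ℝ}

lemma hasSum_pow_natAbs (hb0 : 0 ≤ b) (hb1 : b < 1) :
    HasSum (fun l : ℤ => b ^ l.natAbs) ((1 + b) / (1 - b)) := by
  have hnat : HasSum (fun n : ℕ => b ^ n) (1 - b)⁻¹ := hasSum_geometric_of_lt_one hb0 hb1
  have hpos : HasSum (fun n : ℕ => b ^ (n : ℤ).natAbs) (1 - b)⁻¹ := by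
    simpa only [Int.natAbs_natCast] using hnat
  have hneg : HasSum (fun n : ℕ => b ^ (-((n : ℤ) + 1)).natAbs) (b * (1 - b)⁻¹) := by
    simp only [show ∀ n : ℕ, (-((n : ℤ) + 1)).natAbs = n + 1 by omega, pow_succ']
    exact hnat.mul_left b
  have : 1 - b ≠ 0 := sub_ne_zero.mpr hb1.ne'
  rw [show (1 + b) / (1 - b) = (1 - b)⁻¹ + b * (1 - b)⁻¹ by field_simp]
  exact HasSum.of_nat_of_neg_add_one (f := fun l : ℤ => b ^ l.natAbs) hpos hneg

lemma hasSum_discreteLaplace (hb0 : 0 ≤ b) (hb1 : b < 1) :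
    HasSum (fun l : ℤ => (1 - b) / (1 + b) * b ^ l.natAbs) 1 := by
  have : 1 - b ≠ 0 := sub_ne_zero.mpr hb1.ne'
  have : 1 + b ≠ 0 := by positivity
  have h := (hasSum_pow_natAbs hb0 hb1).mul_left ((1 - b) / (1 + b))
  rwa [div_mul_div_cancel₀ this, div_self ‹_›] at h

lemma hasSum_tulapCdf (hb0 : 0 ≤ b) (hb1 : b < 1) (t : ℝ) :
    HasSum (fun l : ℤ => (1 - b) / (1 + b) * b ^ l.natAbs * max 0 (min 1 (t - l + 1 / 2)))
      (tulapCdf b t) := by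
  refine (Summable.of_nonneg_of_le (fun l => ?_) (fun l => ?_)
    (hasSum_discreteLaplace hb0 hb1).summable).hasSum
  · have : 0 ≤ 1 - b := by linarith
    positivity
  · have : 0 ≤ 1 - b := by linarith
    exact mul_le_of_le_one_right (by positivity) (max_le zero_le_one (min_le_left _ _))

lemma mul_tulapCdf_add_one {t : ℝ} (ht : t ≤ -(1 / 2)) :
    b * tulapCdf b (t + 1) = tulapCdf b t := by
  rw [tulapCdf, ← (Equiv.addRight (1 : ℤ)).tsum_eq, ← tsum_mul_left]
  refine tsum_congr fun l => ?_
  simp only [Equiv.coe_addRight, Int.cast_add, Int.cast_one, add_sub_add_right_eq_sub]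
  rcases le_or_gt (t - l + 1 / 2) 0 with hl | hl
  · rw [max_eq_left (min_le_of_right_le hl)]
    ring
  · have hl : l < 0 := by exact_mod_cast (show (l : ℝ) < 0 by linarith)
    have : l.natAbs = (l + 1).natAbs + 1 := by omega
    rw [this, pow_succ]
    ring

lemma tulapCdf_neg (hb0 : 0 ≤ b) (hb1 : b < 1) (t : ℝ) : tulapCdf b (-t) = 1 - tulapCdf b t := by
  have hclamp : ∀ u : ℝ, 1 - max 0 (min 1 u) = max 0 (min 1 (1 - u)) := by grind
  have hsum := (hasSum_discreteLaplace hb0 hb1).sub (hasSum_tulapCdf hb0 hb1 t)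
  refine ((Equiv.neg ℤ).hasSum_iff.mp ?_).tsum_eq
  refine hsum.congr_fun fun l => ?_
  simp only [Function.comp_apply, Equiv.neg_apply, Int.natAbs_neg, Int.cast_neg]
  rw [← mul_one_sub, hclamp]
  ring_nf

lemma mul_one_sub_tulapCdf (hb0 : 0 ≤ b) (hb1 : b < 1) {t : ℝ} (ht : -(1 / 2) ≤ t) :
    b * (1 - tulapCdf b t) = 1 - tulapCdf b (t + 1) := by
  have h := mul_tulapCdf_add_one (b := b) (t := -(t + 1)) (by linarith)
  rwa [show -(t + 1) + 1 = -t by ring, tulapCdf_neg hb0 hb1, tulapCdf_neg hb0 hb1] at h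

lemma tulapCdf_step (hb0 : 0 ≤ b) (hb1 : b < 1) (t : ℝ) :
    b * tulapCdf b (t + 1) = tulapCdf b t ∨ b * (1 - tulapCdf b t) = 1 - tulapCdf b (t + 1) :=
  (le_total t (-(1 / 2))).imp mul_tulapCdf_add_one (mul_one_sub_tulapCdf hb0 hb1)

end Tulap

lemma le_succ_of_dp_step {φ ψ : ℕ → ℝ} {b : ℝ} (hb : 0 < b) {x : ℕ}
    (hψ : b * ψ (x + 1) = ψ x ∨ b * (1 - ψ x) = 1 - ψ (x + 1))
    (hφ : b * φ (x + 1) ≤ φ x) (hφ' : b * (1 - φ x) ≤ 1 - φ (x + 1)) (h : φ x ≤ ψ x) :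
    φ (x + 1) ≤ ψ (x + 1) := by
  rcases hψ with hψ | hψ
  · exact le_of_mul_le_mul_left (hψ ▸ hφ.trans h) hb
  · nlinarith

noncomputable def binomPmf (n : ℕ) (θ : ℝ) (x : ℕ) : ℝ :=
  n.choose x * θ ^ x * (1 - θ) ^ (n - x)

section Binomial

variable {n : ℕ} {θ θ₀ θ₁ : ℝ}

lemma binomPmf_nonneg (h0 : 0 ≤ θ) (h1 : θ ≤ 1) (x : ℕ) : 0 ≤ binomPmf n θ x := by
  have : 0 ≤ 1 - θ := by linarith
  unfold binomPmf
  positivity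

lemma binomPmf_pos (h0 : 0 < θ) (h1 : θ < 1) {x : ℕ} (hx : x ≤ n) : 0 < binomPmf n θ x := by
  have : 0 < 1 - θ := by linarith
  have : 0 < (n.choose x : ℝ) := by exact_mod_cast Nat.choose_pos hx
  unfold binomPmf
  positivity

lemma binomPmf_zero_pos (h1 : θ < 1) : 0 < binomPmf n θ 0 := by
  have : 0 < 1 - θ := by linarith
  simp only [binomPmf, Nat.choose_zero_right, Nat.cast_one, pow_zero, Nat.sub_zero, one_mul]
  positivity

lemma sum_mul_binomPmf_zero (g : ℕ → ℝ) : ∑ x ∈ range (n + 1), g x * binomPmf n 0 x = g 0 := by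
  rw [sum_eq_single_of_mem 0 (mem_range.mpr n.succ_pos) fun x _ hx => by simp [binomPmf, hx]]
  simp [binomPmf]

lemma binomPmf_mul_le_mul (h0 : 0 ≤ θ₀) (h01 : θ₀ ≤ θ₁) (h1 : θ₁ ≤ 1) {x y : ℕ} (hxy : x ≤ y)
    (hy : y ≤ n) :
    binomPmf n θ₁ x * binomPmf n θ₀ y ≤ binomPmf n θ₀ x * binomPmf n θ₁ y := by
  obtain ⟨d, rfl⟩ := Nat.exists_eq_add_of_le hxy
  have hd : (θ₀ * (1 - θ₁)) ^ d ≤ (θ₁ * (1 - θ₀)) ^ d :=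
    pow_le_pow_left₀ (by nlinarith) (by nlinarith) d
  have hcommon : 0 ≤ (n.choose x : ℝ) * n.choose (x + d) * θ₀ ^ x * θ₁ ^ x *
      (1 - θ₀) ^ (n - (x + d)) * (1 - θ₁) ^ (n - (x + d)) := by
    have : 0 ≤ θ₁ := h0.trans h01
    have : 0 ≤ 1 - θ₀ := by linarith
    have : 0 ≤ 1 - θ₁ := by linarith
    positivity
  unfold binomPmf
  rw [show n - x = n - (x + d) + d by omega]
  simp only [pow_add, mul_pow] at hd ⊢
  nlinarith [mul_le_mul_of_nonneg_left hd hcommon]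

end Binomial

lemma sum_mul_mul_le_of_sign_change {g w₀ w₁ : ℕ → ℝ} {n k : ℕ} (hk : k ≤ n)
    (hmlr : ∀ x y, x ≤ y → y ≤ n → w₁ x * w₀ y ≤ w₀ x * w₁ y)
    (hbelow : ∀ x < k, 0 ≤ g x) (habove : ∀ x, k ≤ x → x ≤ n → g x ≤ 0) :
    (∑ x ∈ range (n + 1), g x * w₁ x) * w₀ k ≤ (∑ x ∈ range (n + 1), g x * w₀ x) * w₁ k := by
  rw [sum_mul, sum_mul]
  refine sum_le_sum fun x hx => ?_
  have hxn : x ≤ n := Nat.lt_succ_iff.mp (mem_range.mp hx)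
  rcases lt_or_ge x k with hxk | hkx
  · have := mul_le_mul_of_nonneg_left (hmlr x k hxk.le hk) (hbelow x hxk)
    linarith
  · have := mul_le_mul_of_nonpos_left (hmlr k x hkx hxn) (habove x hkx hxn)
    linarith

lemma sum_mul_binomPmf_nonpos_of_sign_change {g : ℕ → ℝ} {n : ℕ} {θ₀ θ₁ : ℝ} (h0 : 0 ≤ θ₀)
    (h01 : θ₀ < θ₁) (h1 : θ₁ ≤ 1) (hg : ∀ x < n, g x ≤ 0 → g (x + 1) ≤ 0)
    (hmean : ∑ x ∈ range (n + 1), g x * binomPmf n θ₀ x ≤ 0) :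
    ∑ x ∈ range (n + 1), g x * binomPmf n θ₁ x ≤ 0 := by
  classical
  have hex : ∃ k, k ≤ n ∧ g k ≤ 0 := by
    by_contra! hpos
    refine hmean.not_gt (sum_pos' (fun x hx => ?_) ⟨0, mem_range.mpr n.succ_pos, ?_⟩)
    · exact mul_nonneg (hpos x (Nat.lt_succ_iff.mp (mem_range.mp hx))).le
        (binomPmf_nonneg h0 (by linarith) x)
    · exact mul_pos (hpos 0 n.zero_le) (binomPmf_zero_pos (by linarith))
  obtain ⟨hkn, hk⟩ := Nat.find_spec hex
  have hbelow : ∀ x < Nat.find hex, 0 ≤ g x := fun x hx =>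
    le_of_lt (not_le.mp fun hgx => Nat.find_min hex hx ⟨by omega, hgx⟩)
  have habove : ∀ x, Nat.find hex ≤ x → x ≤ n → g x ≤ 0 := by
    intro x hkx
    induction x, hkx using Nat.le_induction with
    | base => exact fun _ => hk
    | succ x _ ih => exact fun hx => hg x (by omega) (ih (by omega))
  have hw₀ : 0 < binomPmf n θ₀ (Nat.find hex) := by
    rcases h0.eq_or_lt with rfl | h0
    · rw [sum_mul_binomPmf_zero] at hmean
      rw [(Nat.find_eq_zero hex).mpr ⟨n.zero_le, hmean⟩]
      exact binomPmf_zero_pos (by linarith)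
    · exact binomPmf_pos h0 (by linarith) hkn
  have hcross := sum_mul_mul_le_of_sign_change hkn
    (fun x y hxy hy => binomPmf_mul_le_mul h0 h01.le h1 hxy hy) hbelow habove
  have hw₁ := binomPmf_nonneg (h0.trans h01.le) h1 (n := n) (Nat.find hex)
  exact nonpos_of_mul_nonpos_left (hcross.trans (mul_nonpos_of_nonpos_of_nonneg hmean hw₁)) hw₀

theorem stmt_11_general (n : ℕ) (ε : ℝ) (hε : 0 < ε)
    (θ₀ θ₁ α m : ℝ) (hθ₀ : 0 ≤ θ₀) (hθ : θ₀ < θ₁) (hθ₁ : θ₁ ≤ 1)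
    (F₀ : ℝ → ℝ)
    (hF₀ : ∀ x : ℝ, F₀ x = ∑' l : ℤ,
      ((1 - Real.exp (-ε)) / (1 + Real.exp (-ε))) * Real.exp (-ε) ^ l.natAbs *
        max 0 (min 1 (x - l + 1 / 2)))
    (φstar : ℕ → ℝ) (hφstar : ∀ x : ℕ, φstar x = F₀ ((x : ℝ) - m))
    (hsize : ∑ x ∈ Finset.range (n + 1),
      φstar x * (n.choose x : ℝ) * θ₀ ^ x * (1 - θ₀) ^ (n - x) = α)
    (φ : ℕ → ℝ)
    (hDP : ∀ x : ℕ, 1 ≤ x → x ≤ n →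
      φ x ≤ Real.exp ε * φ (x - 1) ∧ φ (x - 1) ≤ Real.exp ε * φ x ∧
      1 - φ x ≤ Real.exp ε * (1 - φ (x - 1)) ∧
      1 - φ (x - 1) ≤ Real.exp ε * (1 - φ x))
    (hlevel : ∑ x ∈ Finset.range (n + 1),
      φ x * (n.choose x : ℝ) * θ₀ ^ x * (1 - θ₀) ^ (n - x) ≤ α) :
    ∑ x ∈ Finset.range (n + 1),
      φ x * (n.choose x : ℝ) * θ₁ ^ x * (1 - θ₁) ^ (n - x) ≤
    ∑ x ∈ Finset.range (n + 1),
      φstar x * (n.choose x : ℝ) * θ₁ ^ x * (1 - θ₁) ^ (n - x) := by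
  set b := Real.exp (-ε)
  have hb : 0 < b := Real.exp_pos _
  have hb1 : b < 1 := Real.exp_lt_one_iff.mpr (neg_lt_zero.mpr hε)
  have hstar : ∀ x : ℕ, φstar x = tulapCdf b (x - m) := fun x => (hφstar x).trans (hF₀ _)
  have hstep : ∀ x < n, φ x - φstar x ≤ 0 → φ (x + 1) - φstar (x + 1) ≤ 0 := by
    intro x hx
    obtain ⟨hup, -, -, hdown⟩ := hDP (x + 1) (by omega) (by omega)
    rw [Nat.add_sub_cancel, ← inv_mul_le_iff₀ (Real.exp_pos ε), ← Real.exp_neg] at hup hdown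
    simp only [sub_nonpos]
    refine le_succ_of_dp_step hb ?_ hup hdown
    rw [hstar, hstar, Nat.cast_succ, add_sub_right_comm]
    exact tulapCdf_step hb.le hb1 _
  have hmean := sum_mul_binomPmf_nonpos_of_sign_change hθ₀ hθ hθ₁ hstep (by
    simp only [binomPmf, sub_mul, sum_sub_distrib, ← mul_assoc]
    linarith)
  simp only [binomPmf, sub_mul, sum_sub_distrib, ← mul_assoc] at hmean
  linarith

theorem stmt_11 (n : ℕ) (hn : 1 ≤ n) (ε : ℝ) (hε : 0 < ε)
    (θ₀ θ₁ α m : ℝ) (hθ₀ : 0 ≤ θ₀) (hθ : θ₀ < θ₁) (hθ₁ : θ₁ ≤ 1)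
    (hα0 : 0 < α) (hα1 : α < 1)
    (F₀ : ℝ → ℝ)
    (hF₀ : ∀ x : ℝ, F₀ x = ∑' l : ℤ,
      ((1 - Real.exp (-ε)) / (1 + Real.exp (-ε))) * Real.exp (-ε) ^ l.natAbs *
        max 0 (min 1 (x - l + 1 / 2)))
    (φstar : ℕ → ℝ) (hφstar : ∀ x : ℕ, φstar x = F₀ ((x : ℝ) - m))
    (hsize : ∑ x ∈ Finset.range (n + 1),
      φstar x * (n.choose x : ℝ) * θ₀ ^ x * (1 - θ₀) ^ (n - x) = α)
    (φ : ℕ → ℝ) (h01 : ∀ x ≤ n, φ x ∈ Set.Icc (0 : ℝ) 1)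
    (hDP : ∀ x : ℕ, 1 ≤ x → x ≤ n →
      φ x ≤ Real.exp ε * φ (x - 1) ∧ φ (x - 1) ≤ Real.exp ε * φ x ∧
      1 - φ x ≤ Real.exp ε * (1 - φ (x - 1)) ∧
      1 - φ (x - 1) ≤ Real.exp ε * (1 - φ x))
    (hlevel : ∑ x ∈ Finset.range (n + 1),
      φ x * (n.choose x : ℝ) * θ₀ ^ x * (1 - θ₀) ^ (n - x) ≤ α) :
    ∑ x ∈ Finset.range (n + 1),
      φ x * (n.choose x : ℝ) * θ₁ ^ x * (1 - θ₁) ^ (n - x) ≤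
    ∑ x ∈ Finset.range (n + 1),
      φstar x * (n.choose x : ℝ) * θ₁ ^ x * (1 - θ₁) ^ (n - x) :=
  stmt_11_general n ε hε θ₀ θ₁ α m hθ₀ hθ hθ₁ F₀ hF₀ φstar hφstar hsize φ hDP hlevel
end

section
/- If a family of distributions {μ_x : x ∈ Xⁿ} on ℝ, each absolutely continuous with respect to Lebesgue measure, is parameterized by a statistic T(x) and has monotone likelihood ratio in T(x), then the family satisfies (ε,δ)-DP if and only if for all x₁, x₂ with Hamming distance 1 and all t ∈ ℝ: μ_{x₁}((−∞, t)) ≤ e^ε μ_{x₂}((−∞, t)) + δ and μ_{x₁}((t, ∞)) ≤ e^ε μ_{x₂}((t, ∞)) + δ. -/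
open MeasureTheory

/-- Arithmetic core of the MLR argument: if the likelihood ratio at a "known" point `(u₁,u₂)`
exceeds `E` and the ratio at `(v₁,v₂)` is at least as large, then `E * v₂ ≤ v₁`. -/
lemma mlr_arith (E u₁ u₂ v₁ v₂ : ℝ) (hE : 0 < E) (hu2 : 0 ≤ u₂) (hv1 : 0 ≤ v₁) (hv2 : 0 ≤ v₂)
    (hu : E * u₂ < u₁) (hr : u₁ * v₂ ≤ v₁ * u₂) : 0 ≤ v₁ - E * v₂ := by
  rcases hv2.eq_or_lt with h2 | h2
  · simpa [← h2] using hv1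
  rcases hu2.eq_or_lt with h1 | h1
  · nlinarith
  · nlinarith

/-- Key integral lemma: if `f₁ ≤ E f₂` off `S` and `E f₂ ≤ f₁` a.e. on `S`, then the
bound on `S` gives the bound everywhere. -/
lemma key_int (E δ : ℝ) (hδ : 0 ≤ δ) (f₁ f₂ : ℝ → ℝ)
    (hi1 : Integrable f₁) (hi2 : Integrable f₂)
    (S : Set ℝ) (hS : MeasurableSet S)
    (h1 : ∀ t, t ∉ S → f₁ t ≤ E * f₂ t)
    (h2 : ∀ᵐ t ∂(volume : Measure ℝ), t ∈ S → 0 ≤ f₁ t - E * f₂ t)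
    (hbound : ∫ t in S, f₁ t ≤ (E * ∫ t in S, f₂ t) + δ)
    (B : Set ℝ) (hB : MeasurableSet B) :
    ∫ t in B, f₁ t ≤ (E * ∫ t in B, f₂ t) + δ := by
  set h : ℝ → ℝ := fun t => f₁ t - E * f₂ t with hh
  have hih : Integrable h := hi1.sub (hi2.const_mul E)
  have hsplit : ∀ (C : Set ℝ), MeasurableSet C →
      ∫ t in C, h t = (∫ t in C, f₁ t) - E * ∫ t in C, f₂ t := by
    intro C hC
    rw [integral_sub hi1.integrableOn (hi2.integrableOn.const_mul E), integral_const_mul]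
  have step1 : ∫ t in B, h t ≤ ∫ t in S, h t := by
    have hdecomp : (∫ t in B ∩ S, h t) + ∫ t in B \ S, h t = ∫ t in B, h t :=
      integral_inter_add_diff (s := B) hS hih.integrableOn
    have hneg : ∫ t in B \ S, h t ≤ 0 := by
      apply setIntegral_nonpos (hB.diff hS)
      intro t ht
      have := h1 t ht.2
      simp only [hh]; linarith
    have hmono : ∫ t in B ∩ S, h t ≤ ∫ t in S, h t := by
      apply setIntegral_mono_set hih.integrableOn
      · exact (ae_restrict_iff' hS).mpr h2
      · exact Filter.Eventually.of_forall fun t ht => ht.2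
    linarith
  rw [← sub_nonneg] at *
  have := hsplit B hB
  have := hsplit S hS
  linarith

theorem stmt_13 {X : Type*} [DecidableEq X] (n : ℕ) (ε δ : ℝ) (hε : 0 < ε) (hδ : 0 ≤ δ)
    (μ : (Fin n → X) → Measure ℝ) (hprob : ∀ x, IsProbabilityMeasure (μ x))
    (f : (Fin n → X) → ℝ → ℝ) (hf0 : ∀ x t, 0 ≤ f x t) (hfmeas : ∀ x, Measurable (f x))
    (hdens : ∀ x, μ x = volume.withDensity (fun t => ENNReal.ofReal (f x t)))
    (T : (Fin n → X) → ℝ)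
    (hMLR : ∀ x₁ x₂ : Fin n → X, T x₂ ≤ T x₁ →
      ∀ s t : ℝ, s ≤ t → f x₁ s * f x₂ t ≤ f x₁ t * f x₂ s) :
    ((∀ x₁ x₂ : Fin n → X, hammingDist x₁ x₂ = 1 → ∀ B : Set ℝ, MeasurableSet B →
        (μ x₁ B).toReal ≤ Real.exp ε * (μ x₂ B).toReal + δ) ↔
      (∀ x₁ x₂ : Fin n → X, hammingDist x₁ x₂ = 1 → ∀ t : ℝ,
        (μ x₁ (Set.Iio t)).toReal ≤ Real.exp ε * (μ x₂ (Set.Iio t)).toReal + δ ∧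
        (μ x₁ (Set.Ioi t)).toReal ≤ Real.exp ε * (μ x₂ (Set.Ioi t)).toReal + δ)) := by
  set E := Real.exp ε with hEdef
  have hE : 0 < E := Real.exp_pos ε
  have hE1 : 1 ≤ E := Real.one_le_exp hε.le
  -- all densities integrate to 1, hence are integrable
  have hlint : ∀ x, ∫⁻ t, ENNReal.ofReal (f x t) = 1 := by
    intro x
    have := (hprob x).measure_univ
    rw [hdens x, withDensity_apply _ MeasurableSet.univ, Measure.restrict_univ] at this
    exact this
  have hint : ∀ x, Integrable (f x) := by
    intro x
    refine ⟨(hfmeas x).aestronglyMeasurable, ?_⟩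
    rw [hasFiniteIntegral_iff_ofReal (Filter.Eventually.of_forall (hf0 x)), hlint x]
    exact ENNReal.one_lt_top
  have htoReal : ∀ x (B : Set ℝ), MeasurableSet B → (μ x B).toReal = ∫ t in B, f x t := by
    intro x B hB
    rw [hdens x, withDensity_apply _ hB,
      integral_eq_lintegral_of_nonneg_ae (Filter.Eventually.of_forall (hf0 x))
        ((hfmeas x).aestronglyMeasurable.restrict)]
  have hint1 : ∀ x, ∫ t, f x t = 1 := by
    intro x
    have := htoReal x Set.univ MeasurableSet.univ
    rw [(hprob x).measure_univ] at this
    simpa using this.symm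
  constructor
  · intro H x₁ x₂ hd t
    exact ⟨H x₁ x₂ hd _ measurableSet_Iio, H x₁ x₂ hd _ measurableSet_Ioi⟩
  · intro H x₁ x₂ hd B hB
    rw [htoReal x₁ B hB, htoReal x₂ B hB]
    set F₁ := f x₁ with hF₁
    set F₂ := f x₂ with hF₂
    set A : Set ℝ := {t | E * F₂ t < F₁ t} with hA
    -- helper to finish given a suitable set S
    have finish : ∀ S : Set ℝ, MeasurableSet S →
        (∀ t, t ∉ S → F₁ t ≤ E * F₂ t) →
        (∀ᵐ t ∂(volume : Measure ℝ), t ∈ S → 0 ≤ F₁ t - E * F₂ t) →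
        (∫ t in S, F₁ t ≤ (E * ∫ t in S, F₂ t) + δ) →
        ∫ t in B, F₁ t ≤ (E * ∫ t in B, F₂ t) + δ := by
      intro S hS h1 h2 h3
      exact key_int E δ hδ F₁ F₂ (hint x₁) (hint x₂) S hS h1 h2 h3 B hB
    by_cases hAne : A.Nonempty
    · rcases le_total (T x₂) (T x₁) with hT | hT
      · -- likelihood ratio nondecreasing; A is (a.e.) an upper ray
        have claim : ∀ s t : ℝ, s ≤ t → s ∈ A → 0 ≤ F₁ t - E * F₂ t := by
          intro s t hst hs
          exact mlr_arith E (F₁ s) (F₂ s) (F₁ t) (F₂ t) hE (hf0 x₂ s) (hf0 x₁ t) (hf0 x₂ t)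
            hs (hMLR x₁ x₂ hT s t hst)
        by_cases hbdd : BddBelow A
        · set a := sInf A with ha
          apply finish (Set.Ici a) measurableSet_Ici
          · intro t ht
            simp only [Set.mem_Ici, not_le] at ht
            by_contra hcon
            push_neg at hcon
            exact absurd (csInf_le hbdd hcon) (not_le.mpr ht)
          · have hae : ∀ᵐ t ∂(volume : Measure ℝ), t ≠ a := by
              rw [ae_iff]
              simpa using measure_singleton (μ := (volume : Measure ℝ)) a
            filter_upwards [hae] with t hta ht
            have hlt : a < t := lt_of_le_of_ne ht (Ne.symm hta)
            obtain ⟨s, hsA, hst⟩ := exists_lt_of_csInf_lt hAne hlt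
            exact claim s t hst.le hsA
          · rw [setIntegral_congr_set (f := F₁) Ioi_ae_eq_Ici.symm,
              setIntegral_congr_set (f := F₂) Ioi_ae_eq_Ici.symm]
            have := (H x₁ x₂ hd a).2
            rwa [htoReal x₁ _ measurableSet_Ioi, htoReal x₂ _ measurableSet_Ioi] at this
        · -- A unbounded below: everything is eventually in A
          apply finish Set.univ MeasurableSet.univ
          · intro t ht; exact absurd (Set.mem_univ t) ht
          · apply Filter.Eventually.of_forall
            intro t _
            have : ∃ s ∈ A, s ≤ t := by
              by_contra hcon
              push_neg at hcon
              exact hbdd ⟨t, fun s hs => (hcon s hs).le⟩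
            obtain ⟨s, hsA, hst⟩ := this
            exact claim s t hst hsA
          · rw [Measure.restrict_univ, hint1 x₁, hint1 x₂]
            nlinarith
      · -- likelihood ratio nonincreasing; A is (a.e.) a lower ray
        have claim : ∀ s t : ℝ, t ≤ s → s ∈ A → 0 ≤ F₁ t - E * F₂ t := by
          intro s t hst hs
          have hr := hMLR x₂ x₁ hT t s hst
          exact mlr_arith E (F₁ s) (F₂ s) (F₁ t) (F₂ t) hE (hf0 x₂ s) (hf0 x₁ t) (hf0 x₂ t)
            hs (by nlinarith)
        by_cases hbdd : BddAbove A
        · set b := sSup A with hb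
          apply finish (Set.Iic b) measurableSet_Iic
          · intro t ht
            simp only [Set.mem_Iic, not_le] at ht
            by_contra hcon
            push_neg at hcon
            exact absurd (le_csSup hbdd hcon) (not_le.mpr ht)
          · have hae : ∀ᵐ t ∂(volume : Measure ℝ), t ≠ b := by
              rw [ae_iff]
              simpa using measure_singleton (μ := (volume : Measure ℝ)) b
            filter_upwards [hae] with t hta ht
            have hlt : t < b := lt_of_le_of_ne ht hta
            obtain ⟨s, hsA, hst⟩ := exists_lt_of_lt_csSup hAne hlt
            exact claim s t hst.le hsA
          · rw [setIntegral_congr_set (f := F₁) Iio_ae_eq_Iic.symm,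
              setIntegral_congr_set (f := F₂) Iio_ae_eq_Iic.symm]
            have := (H x₁ x₂ hd b).1
            rwa [htoReal x₁ _ measurableSet_Iio, htoReal x₂ _ measurableSet_Iio] at this
        · apply finish Set.univ MeasurableSet.univ
          · intro t ht; exact absurd (Set.mem_univ t) ht
          · apply Filter.Eventually.of_forall
            intro t _
            have : ∃ s ∈ A, t ≤ s := by
              by_contra hcon
              push_neg at hcon
              exact hbdd ⟨t, fun s hs => (hcon s hs).le⟩
            obtain ⟨s, hsA, hst⟩ := this
            exact claim s t hst hsA
          · rw [Measure.restrict_univ, hint1 x₁, hint1 x₂]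
            nlinarith
    · -- A empty: pointwise domination
      apply finish ∅ MeasurableSet.empty
      · intro t _
        by_contra hcon
        push_neg at hcon
        exact hAne ⟨t, hcon⟩
      · simp
      · simpa using hδ
end

section
/- Let T : Xⁿ → ℤ have sensitivity 1, i.e., |T(x) − T(x')| ≤ 1 whenever x and x' differ in one coordinate. Then the mechanism releasing Z ~ Tulap(T(x), b, q) with b = e^{−ε} and q = 2δb/(1 − b + 2δb) satisfies (ε,δ)-differential privacy: for all measurable B ⊆ ℝ and all neighboring x, x', P(Z ∈ B | T(x)) ≤ e^ε P(Z ∈ B | T(x')) + δ. -/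
/-!
Let `p` be the `DLap(b)` weights on `ℤ`, `F` the CDF of `N + U` with `N ~ p` and
`U ~ Uniform(-1/2, 1/2)`, and `f u = p (round u)` its density. The one-step bounds
`b p (l ± 1) ≤ p l` give `b f (u + 1) ≤ f u ≤ f (u + 1) / b`, as well as `b F (u + 1) ≤ F u`
and, by reflecting `p`, `b (1 - F u) ≤ 1 - F (u + 1)`. For neighbours `c' = c ± 1` the Tulap
densities at `c` and `c'` are therefore within the factor `1 / b = e^ε` of each other, except
where `t - c` lies in the Tulap support and `t - c'` does not; by the CDF bounds `F (t - c)` then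
lies in a band of width `q / (2b) - q / 2`. Since `F` pushes the law of `N + U` forward to the
uniform law, that band has Tulap mass at most `(q / (2b) - q / 2) / (1 - q)`, which is `δ` for
the given `q`.
-/

open MeasureTheory Set
open scoped ENNReal

theorem measure_preimage_Icc_le {μ : Measure ℝ} {F : ℝ → ℝ} (hF : Continuous F)
    (hμ : ∀ x y, x ≤ y → μ (Icc x y) ≤ ENNReal.ofReal (F y - F x)) (a a' : ℝ) :
    μ (F ⁻¹' Icc a a') ≤ ENNReal.ofReal (a' - a) := by
  have hcompact :
      ∀ K ⊆ F ⁻¹' Icc a a', IsCompact K → μ K ≤ ENNReal.ofReal (a' - a) := by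
    intro K hKS hK
    rcases K.eq_empty_or_nonempty with rfl | hne
    · simp
    calc μ K ≤ μ (Icc (sInf K) (sSup K)) := measure_mono hK.isBounded.subset_Icc_sInf_sSup
      _ ≤ ENNReal.ofReal (F (sSup K) - F (sInf K)) :=
        hμ _ _ (csInf_le_csSup hne hK.bddBelow hK.bddAbove)
      _ ≤ ENNReal.ofReal (a' - a) := ENNReal.ofReal_le_ofReal <| by
        linarith [(hKS (hK.sSup_mem hne)).2, (hKS (hK.sInf_mem hne)).1]
  have hmono : Monotone fun n : ℕ => F ⁻¹' Icc a a' ∩ Metric.closedBall 0 n := fun m n h =>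
    inter_subset_inter_right _ (Metric.closedBall_subset_closedBall (by exact_mod_cast h))
  rw [← inter_univ (F ⁻¹' Icc a a'), ← Metric.iUnion_closedBall_nat 0, inter_iUnion,
    hmono.measure_iUnion]
  exact iSup_le fun n => hcompact _ inter_subset_left
    ((isCompact_closedBall 0 n).inter_left (isClosed_Icc.preimage hF))

theorem withDensity_apply_le_mul_add {α : Type*} [MeasurableSpace α] {μ : Measure α}
    [SFinite μ] {f g : α → ℝ≥0∞} (hg : Measurable g) {E : Set α} (hE : MeasurableSet E)
    {k : ℝ≥0∞} (hfg : ∀ x ∉ E, f x ≤ k * g x) (B : Set α) :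
    μ.withDensity f B ≤ k * μ.withDensity g B + μ.withDensity f E := by
  rw [withDensity_apply' _ B, withDensity_apply' _ B, withDensity_apply _ hE]
  calc ∫⁻ x in B, f x ∂μ
      ≤ ∫⁻ x in B, (k * g x + E.indicator f x) ∂μ := lintegral_mono fun x => by
        by_cases hx : x ∈ E
        · rw [indicator_of_mem hx]
          exact le_add_self
        · rw [indicator_of_notMem hx, add_zero]
          exact hfg x hx
    _ = k * ∫⁻ x in B, g x ∂μ + ∫⁻ x in B, E.indicator f x ∂μ := by
        rw [lintegral_add_left (hg.const_mul k), lintegral_const_mul k hg]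
    _ ≤ k * ∫⁻ x in B, g x ∂μ + ∫⁻ x in E, f x ∂μ := by
        refine add_le_add le_rfl ?_
        rw [← lintegral_indicator hE]
        exact setLIntegral_le_lintegral _ _

lemma ENNReal.toReal_le_mul_add_of_le {x y : ℝ≥0∞} {k d : ℝ} (hk : 0 ≤ k) (hd : 0 ≤ d)
    (hy : y ≠ ∞) (h : x ≤ ENNReal.ofReal k * y + ENNReal.ofReal d) :
    x.toReal ≤ k * y.toReal + d := by
  refine ENNReal.toReal_le_of_le_ofReal (by positivity) (h.trans_eq ?_)
  rw [ENNReal.ofReal_add (by positivity) hd, ENNReal.ofReal_mul hk, ENNReal.ofReal_toReal hy]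

namespace Tulap

noncomputable def clamp01 (x : ℝ) : ℝ := max 0 (min 1 x)

lemma clamp01_nonneg (x : ℝ) : 0 ≤ clamp01 x := le_max_left _ _

lemma clamp01_le_one (x : ℝ) : clamp01 x ≤ 1 := max_le zero_le_one (min_le_left _ _)

lemma monotone_clamp01 : Monotone clamp01 := fun _ _ h => max_le_max le_rfl (min_le_min le_rfl h)

lemma continuous_clamp01 : Continuous clamp01 := by unfold clamp01; fun_prop

lemma clamp01_of_nonpos {x : ℝ} (h : x ≤ 0) : clamp01 x = 0 :=
  max_eq_left ((min_le_right _ _).trans h)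

lemma clamp01_of_one_le {x : ℝ} (h : 1 ≤ x) : clamp01 x = 1 := by
  rw [clamp01, min_eq_left h, max_eq_right zero_le_one]

lemma clamp01_of_mem {x : ℝ} (h : x ∈ Icc (0 : ℝ) 1) : clamp01 x = x := by
  rw [clamp01, min_eq_right h.2, max_eq_right h.1]

lemma one_sub_clamp01 (x : ℝ) : 1 - clamp01 x = clamp01 (1 - x) := by
  rcases le_total x 0 with h | h
  · rw [clamp01_of_nonpos h, clamp01_of_one_le (by linarith), sub_zero]
  rcases le_total 1 x with h' | h'
  · rw [clamp01_of_one_le h', clamp01_of_nonpos (by linarith), sub_self]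
  · rw [clamp01_of_mem ⟨h, h'⟩, clamp01_of_mem ⟨by linarith, by linarith⟩]

lemma norm_mul_clamp01_le (a x : ℝ) : ‖a * clamp01 x‖ ≤ |a| := by
  rw [Real.norm_eq_abs, abs_mul, abs_of_nonneg (clamp01_nonneg _)]
  exact mul_le_of_le_one_right (abs_nonneg _) (clamp01_le_one _)

lemma summable_mul_clamp01 {p : ℤ → ℝ} (hp : Summable p) (g : ℤ → ℝ) :
    Summable fun l => p l * clamp01 (g l) :=
  hp.abs.of_norm_bounded fun _ => norm_mul_clamp01_le _ _

/-- The CDF of `N + U` for `N ~ p` on `ℤ` and an independent `U ~ Uniform(-1/2, 1/2)`. -/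
noncomputable def smoothedCdf (p : ℤ → ℝ) (u : ℝ) : ℝ :=
  ∑' l : ℤ, p l * clamp01 (u - l + 1 / 2)

noncomputable def smoothedPdf (p : ℤ → ℝ) (u : ℝ) : ℝ := p (round u)

section Smoothed

variable {p : ℤ → ℝ}

lemma continuous_smoothedCdf (hp : Summable p) : Continuous (smoothedCdf p) :=
  continuous_tsum (fun _ => continuous_const.mul (continuous_clamp01.comp (by fun_prop))) hp.abs
    fun _ _ => norm_mul_clamp01_le _ _

lemma monotone_smoothedCdf (hp0 : ∀ l, 0 ≤ p l) (hp : Summable p) : Monotone (smoothedCdf p) :=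
  fun _ _ h => Summable.tsum_le_tsum
    (fun l => mul_le_mul_of_nonneg_left (monotone_clamp01 (by linarith)) (hp0 l))
    (summable_mul_clamp01 hp _) (summable_mul_clamp01 hp _)

lemma clamp01_sub_clamp01_of_lt_round {u v : ℝ} (huv : u ≤ v) (hv : v < round u + 1 / 2)
    (l : ℤ) :
    clamp01 (v - l + 1 / 2) - clamp01 (u - l + 1 / 2) = if l = round u then v - u else 0 := by
  have hu := (round_eq_iff.1 rfl : u ∈ Ico ((round u : ℝ) - 1 / 2) (round u + 1 / 2)).1
  rcases lt_trichotomy l (round u) with hl | rfl | hl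
  · have : (l : ℝ) + 1 ≤ round u := by exact_mod_cast hl
    rw [if_neg hl.ne, clamp01_of_one_le (by linarith), clamp01_of_one_le (by linarith), sub_self]
  · rw [if_pos rfl, clamp01_of_mem ⟨by linarith, by linarith⟩,
      clamp01_of_mem ⟨by linarith, by linarith⟩]
    ring
  · have : (round u : ℝ) + 1 ≤ l := by exact_mod_cast hl
    rw [if_neg hl.ne', clamp01_of_nonpos (by linarith), clamp01_of_nonpos (by linarith), sub_self]

lemma smoothedCdf_sub_of_lt_round (hp : Summable p) {u v : ℝ} (huv : u ≤ v)
    (hv : v < round u + 1 / 2) :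
    smoothedCdf p v - smoothedCdf p u = smoothedPdf p u * (v - u) := by
  rw [smoothedCdf, smoothedCdf,
    ← (summable_mul_clamp01 hp _).tsum_sub (summable_mul_clamp01 hp _)]
  simp_rw [← mul_sub, clamp01_sub_clamp01_of_lt_round huv hv, mul_ite, mul_zero]
  exact tsum_ite_eq _ _

lemma hasDerivWithinAt_smoothedCdf (hp : Summable p) (u : ℝ) :
    HasDerivWithinAt (smoothedCdf p) (smoothedPdf p u) (Ioi u) u := by
  have hu := (round_eq_iff.1 rfl : u ∈ Ico ((round u : ℝ) - 1 / 2) (round u + 1 / 2)).2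
  have haffine : HasDerivWithinAt (fun v => smoothedCdf p u + smoothedPdf p u * (v - u))
      (smoothedPdf p u) (Ioi u) u := by
    simpa using ((((hasDerivAt_id u).sub_const u).const_mul (smoothedPdf p u)).const_add
      (smoothedCdf p u)).hasDerivWithinAt
  refine haffine.congr_of_eventuallyEq ?_ (by simp)
  filter_upwards [nhdsWithin_le_nhds (Iio_mem_nhds hu), self_mem_nhdsWithin] with v hv huv
  rw [← smoothedCdf_sub_of_lt_round hp (le_of_lt huv) hv]
  ring

lemma measurable_smoothedPdf : Measurable (smoothedPdf p) := by
  unfold smoothedPdf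
  simp_rw [round_eq]
  exact measurable_from_top.comp (measurable_id.add_const _).floor

lemma smoothedPdf_nonneg (hp0 : ∀ l, 0 ≤ p l) (u : ℝ) : 0 ≤ smoothedPdf p u := hp0 _

lemma intervalIntegrable_smoothedPdf (hp0 : ∀ l, 0 ≤ p l) (hp : Summable p) (x y : ℝ) :
    IntervalIntegrable (smoothedPdf p) volume x y :=
  IntervalIntegrable.mono_fun' (g := fun _ => ∑' l, p l) intervalIntegrable_const
    measurable_smoothedPdf.aestronglyMeasurable (ae_of_all _ fun u => by
      dsimp only
      rw [Real.norm_eq_abs, abs_of_nonneg (smoothedPdf_nonneg hp0 u)]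
      exact hp.le_tsum _ fun l _ => hp0 l)

lemma integral_smoothedPdf (hp0 : ∀ l, 0 ≤ p l) (hp : Summable p) {x y : ℝ} (hxy : x ≤ y) :
    ∫ u in x..y, smoothedPdf p u = smoothedCdf p y - smoothedCdf p x :=
  intervalIntegral.integral_eq_sub_of_hasDeriv_right_of_le hxy
    (continuous_smoothedCdf hp).continuousOn
    (fun u _ => hasDerivWithinAt_smoothedCdf hp u) (intervalIntegrable_smoothedPdf hp0 hp x y)

noncomputable def smoothedMeasure (p : ℤ → ℝ) : Measure ℝ :=
  volume.withDensity fun u => ENNReal.ofReal (smoothedPdf p u)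

lemma smoothedMeasure_Icc (hp0 : ∀ l, 0 ≤ p l) (hp : Summable p) {x y : ℝ} (hxy : x ≤ y) :
    smoothedMeasure p (Icc x y) = ENNReal.ofReal (smoothedCdf p y - smoothedCdf p x) := by
  rw [smoothedMeasure, withDensity_apply _ measurableSet_Icc,
    setLIntegral_congr Ioc_ae_eq_Icc.symm,
    ← ofReal_integral_eq_lintegral_ofReal (intervalIntegrable_smoothedPdf hp0 hp x y).1
      (ae_of_all _ (smoothedPdf_nonneg hp0)), ← intervalIntegral.integral_of_le hxy,
    integral_smoothedPdf hp0 hp hxy]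

end Smoothed

section Shift

variable {p : ℤ → ℝ}

lemma smoothedCdf_add_one (u : ℝ) :
    smoothedCdf p (u + 1) = smoothedCdf (fun l => p (l + 1)) u := by
  rw [smoothedCdf, smoothedCdf, ← (Equiv.addRight (1 : ℤ)).tsum_eq]
  congr 1; ext l
  simp only [Equiv.coe_addRight, Int.cast_add, Int.cast_one]
  ring_nf

lemma one_sub_smoothedCdf (hp : Summable p) (hp1 : ∑' l, p l = 1) (u : ℝ) :
    1 - smoothedCdf p u = smoothedCdf (fun l => p (-l)) (-u) := by
  rw [← hp1, smoothedCdf, ← hp.tsum_sub (summable_mul_clamp01 hp _), smoothedCdf,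
    ← (Equiv.neg ℤ).tsum_eq]
  congr 1; ext l
  simp only [Equiv.neg_apply, Int.cast_neg, ← mul_one_sub, one_sub_clamp01]
  ring_nf

lemma mul_smoothedCdf_add_one_le (hp : Summable p) {b : ℝ} (hpb : ∀ l, b * p (l + 1) ≤ p l)
    (u : ℝ) : b * smoothedCdf p (u + 1) ≤ smoothedCdf p u := by
  rw [smoothedCdf_add_one, smoothedCdf, smoothedCdf, ← tsum_mul_left]
  refine Summable.tsum_le_tsum (fun l => ?_)
    ((summable_mul_clamp01 ((Equiv.addRight (1 : ℤ)).summable_iff.2 hp) _).mul_left b)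
    (summable_mul_clamp01 hp _)
  rw [← mul_assoc]
  exact mul_le_mul_of_nonneg_right (hpb l) (clamp01_nonneg _)

lemma mul_one_sub_smoothedCdf_le (hp : Summable p) (hp1 : ∑' l, p l = 1) {b : ℝ}
    (hpb : ∀ l, b * p l ≤ p (l + 1)) (u : ℝ) :
    b * (1 - smoothedCdf p u) ≤ 1 - smoothedCdf p (u + 1) := by
  rw [one_sub_smoothedCdf hp hp1, one_sub_smoothedCdf hp hp1, show -u = -(u + 1) + 1 by ring]
  exact mul_smoothedCdf_add_one_le (hp.comp_injective neg_injective)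
    (fun l => by simpa only [Function.comp_apply, neg_add', sub_add_cancel] using hpb (-l - 1)) _

end Shift

noncomputable def dlapWeight (b : ℝ) (l : ℤ) : ℝ := (1 - b) / (1 + b) * b ^ l.natAbs

section DLap

variable {b : ℝ}

lemma dlapWeight_nonneg (hb0 : 0 ≤ b) (hb1 : b ≤ 1) (l : ℤ) : 0 ≤ dlapWeight b l := by
  unfold dlapWeight
  have : 0 ≤ 1 - b := by linarith
  positivity

lemma hasSum_dlapWeight (hb0 : 0 ≤ b) (hb1 : b < 1) : HasSum (dlapWeight b) 1 := by
  have hgeom := hasSum_geometric_of_lt_one hb0 hb1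
  have hneg (n : ℕ) : b ^ (-((n : ℤ) + 1)).natAbs = b * b ^ n := by
    rw [Int.natAbs_neg, ← Nat.cast_succ, Int.natAbs_natCast, pow_succ']
  have hsum := HasSum.of_nat_of_neg_add_one (f := fun l : ℤ => b ^ l.natAbs)
    (by simpa only [Int.natAbs_natCast] using hgeom) (by simpa only [hneg] using hgeom.mul_left b)
  have h1 : 1 - b ≠ 0 := by linarith
  have h2 : 1 + b ≠ 0 := by linarith
  have htotal : (1 - b) / (1 + b) * ((1 - b)⁻¹ + b * (1 - b)⁻¹) = 1 := by
    field_simp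
  have := hsum.mul_left ((1 - b) / (1 + b))
  rwa [htotal] at this

lemma mul_dlapWeight_add_one_le (hb0 : 0 ≤ b) (hb1 : b ≤ 1) (l : ℤ) :
    b * dlapWeight b (l + 1) ≤ dlapWeight b l := by
  have : 0 ≤ 1 - b := by linarith
  unfold dlapWeight
  rw [mul_left_comm, ← pow_succ']
  exact mul_le_mul_of_nonneg_left (pow_le_pow_of_le_one hb0 hb1 (by omega)) (by positivity)

lemma mul_dlapWeight_le_add_one (hb0 : 0 ≤ b) (hb1 : b ≤ 1) (l : ℤ) :
    b * dlapWeight b l ≤ dlapWeight b (l + 1) := by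
  have : 0 ≤ 1 - b := by linarith
  unfold dlapWeight
  rw [mul_left_comm, ← pow_succ']
  exact mul_le_mul_of_nonneg_left (pow_le_pow_of_le_one hb0 hb1 (by omega)) (by positivity)

end DLap

/-- The density of `Tulap(0, b, q)` when `p = dlapWeight b`: the law of `N + U` conditioned on
`q / 2 ≤ F (N + U) ≤ 1 - q / 2`, an event of probability `1 - q`. -/
noncomputable def tulapPdf (p : ℤ → ℝ) (q u : ℝ) : ℝ :=
  if q / 2 ≤ smoothedCdf p u ∧ smoothedCdf p u ≤ 1 - q / 2 then smoothedPdf p u / (1 - q)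
  else 0

noncomputable def tulapMeasure (p : ℤ → ℝ) (q c : ℝ) : Measure ℝ :=
  volume.withDensity fun t => ENNReal.ofReal (tulapPdf p q (t - c))

section Truncated

variable {p : ℤ → ℝ} {b q : ℝ}

lemma tulapPdf_nonneg (hp0 : ∀ l, 0 ≤ p l) (hq : q ≤ 1) (u : ℝ) : 0 ≤ tulapPdf p q u := by
  unfold tulapPdf
  split_ifs
  · exact div_nonneg (hp0 _) (by linarith)
  · exact le_rfl

lemma tulapPdf_le (hp0 : ∀ l, 0 ≤ p l) (hq : q ≤ 1) (u : ℝ) :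
    tulapPdf p q u ≤ smoothedPdf p u / (1 - q) := by
  unfold tulapPdf
  split_ifs
  · exact le_rfl
  · exact div_nonneg (hp0 _) (by linarith)

lemma measurable_tulapPdf (hp : Summable p) : Measurable (tulapPdf p q) :=
  Measurable.ite (isClosed_Icc.preimage (continuous_smoothedCdf hp)).measurableSet
    (measurable_smoothedPdf.div_const _) measurable_const

lemma measurableSet_smoothedCdf_sub_mem (hp : Summable p) (c a a' : ℝ) :
    MeasurableSet {t | smoothedCdf p (t - c) ∈ Icc a a'} :=
  (isClosed_Icc.preimage ((continuous_smoothedCdf hp).comp (continuous_sub_right c))).measurableSet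

lemma mul_tulapPdf_add_one_le (hp0 : ∀ l, 0 ≤ p l) (hp : Summable p) (hb : 0 < b)
    (hpb : ∀ l, b * p (l + 1) ≤ p l) (hq : q ≤ 1) {u : ℝ}
    (hu : smoothedCdf p (u + 1) ∉ Icc (q / 2) (q / (2 * b))) :
    b * tulapPdf p q (u + 1) ≤ tulapPdf p q u := by
  by_cases hin : q / 2 ≤ smoothedCdf p (u + 1) ∧ smoothedCdf p (u + 1) ≤ 1 - q / 2
  · have hlarge : q < smoothedCdf p (u + 1) * (2 * b) :=
      (div_lt_iff₀ (by positivity)).1 (lt_of_not_ge fun h => hu ⟨hin.1, h⟩)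
    have hin' : q / 2 ≤ smoothedCdf p u ∧ smoothedCdf p u ≤ 1 - q / 2 :=
      ⟨by linarith [mul_smoothedCdf_add_one_le hp hpb u],
        (monotone_smoothedCdf hp0 hp (by linarith : u ≤ u + 1)).trans hin.2⟩
    rw [tulapPdf, tulapPdf, if_pos hin, if_pos hin', smoothedPdf, smoothedPdf, round_add_one,
      mul_div_assoc']
    exact div_le_div_of_nonneg_right (hpb _) (by linarith)
  · rw [tulapPdf, if_neg hin, mul_zero]
    exact tulapPdf_nonneg hp0 hq u

lemma mul_tulapPdf_le_add_one (hp0 : ∀ l, 0 ≤ p l) (hp : Summable p) (hp1 : ∑' l, p l = 1)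
    (hb : 0 < b) (hpb : ∀ l, b * p l ≤ p (l + 1)) (hq : q ≤ 1) {u : ℝ}
    (hu : smoothedCdf p u ∉ Icc (1 - q / (2 * b)) (1 - q / 2)) :
    b * tulapPdf p q u ≤ tulapPdf p q (u + 1) := by
  by_cases hin : q / 2 ≤ smoothedCdf p u ∧ smoothedCdf p u ≤ 1 - q / 2
  · have hsmall : q < (1 - smoothedCdf p u) * (2 * b) :=
      (div_lt_iff₀ (by positivity)).1 (by linarith [lt_of_not_ge fun h => hu ⟨h, hin.2⟩])
    have hin' : q / 2 ≤ smoothedCdf p (u + 1) ∧ smoothedCdf p (u + 1) ≤ 1 - q / 2 :=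
      ⟨hin.1.trans (monotone_smoothedCdf hp0 hp (by linarith : u ≤ u + 1)),
        by linarith [mul_one_sub_smoothedCdf_le hp hp1 hpb u]⟩
    rw [tulapPdf, tulapPdf, if_pos hin, if_pos hin', smoothedPdf, smoothedPdf, round_add_one,
      mul_div_assoc']
    exact div_le_div_of_nonneg_right (hpb _) (by linarith)
  · rw [tulapPdf, if_neg hin, mul_zero]
    exact tulapPdf_nonneg hp0 hq _

lemma tulapMeasure_band_le (hp0 : ∀ l, 0 ≤ p l) (hp : Summable p) (hq : q < 1) (c a a' : ℝ) :
    tulapMeasure p q c {t | smoothedCdf p (t - c) ∈ Icc a a'} ≤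
      ENNReal.ofReal ((a' - a) / (1 - q)) := by
  have hband : MeasurableSet (smoothedCdf p ⁻¹' Icc a a') :=
    (isClosed_Icc.preimage (continuous_smoothedCdf hp)).measurableSet
  have hq' : 0 < 1 - q := by linarith
  rw [tulapMeasure, withDensity_apply _ (measurableSet_smoothedCdf_sub_mem hp c a a')]
  calc ∫⁻ t in (· - c) ⁻¹' (smoothedCdf p ⁻¹' Icc a a'),
        ENNReal.ofReal (tulapPdf p q (t - c))
      = ∫⁻ u in smoothedCdf p ⁻¹' Icc a a', ENNReal.ofReal (tulapPdf p q u) :=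
        (measurePreserving_sub_right volume c).setLIntegral_comp_preimage hband
          (measurable_tulapPdf hp).ennreal_ofReal
    _ ≤ ∫⁻ u in smoothedCdf p ⁻¹' Icc a a',
          ENNReal.ofReal (smoothedPdf p u) * (ENNReal.ofReal (1 - q))⁻¹ :=
        lintegral_mono fun u => by
          rw [← div_eq_mul_inv, ← ENNReal.ofReal_div_of_pos hq']
          exact ENNReal.ofReal_le_ofReal (tulapPdf_le hp0 hq.le u)
    _ = smoothedMeasure p (smoothedCdf p ⁻¹' Icc a a') * (ENNReal.ofReal (1 - q))⁻¹ := by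
        rw [lintegral_mul_const _ measurable_smoothedPdf.ennreal_ofReal, smoothedMeasure,
          withDensity_apply _ hband]
    _ ≤ ENNReal.ofReal (a' - a) * (ENNReal.ofReal (1 - q))⁻¹ := by
        gcongr
        exact measure_preimage_Icc_le (continuous_smoothedCdf hp)
          (fun x y hxy => (smoothedMeasure_Icc hp0 hp hxy).le) a a'
    _ = ENNReal.ofReal ((a' - a) / (1 - q)) := by
        rw [← div_eq_mul_inv, ENNReal.ofReal_div_of_pos hq']

lemma tulapMeasure_le_one (hp0 : ∀ l, 0 ≤ p l) (hp : Summable p) (hq : q < 1) (c : ℝ)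
    (B : Set ℝ) : tulapMeasure p q c B ≤ 1 := by
  calc tulapMeasure p q c B
      ≤ 0 * tulapMeasure p q c B + tulapMeasure p q c
          {t | smoothedCdf p (t - c) ∈ Icc (q / 2) (1 - q / 2)} :=
        withDensity_apply_le_mul_add
          ((measurable_tulapPdf hp).comp (measurable_sub_const c)).ennreal_ofReal
          (measurableSet_smoothedCdf_sub_mem hp c _ _) (fun t ht => by
            rw [zero_mul, tulapPdf, if_neg (show ¬(_ ∧ _) from ht), ENNReal.ofReal_zero]) B
    _ ≤ ENNReal.ofReal ((1 - q / 2 - q / 2) / (1 - q)) := by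
        rw [zero_mul, zero_add]
        exact tulapMeasure_band_le hp0 hp hq c _ _
    _ = 1 := by
        rw [show 1 - q / 2 - q / 2 = 1 - q by ring, div_self (by linarith), ENNReal.ofReal_one]

lemma tulapMeasure_le_of_le_off_band (hp0 : ∀ l, 0 ≤ p l) (hp : Summable p) (hb : 0 < b)
    (hq : q < 1) {c c' a a' : ℝ}
    (hcc' : ∀ t, smoothedCdf p (t - c) ∉ Icc a a' →
      b * tulapPdf p q (t - c) ≤ tulapPdf p q (t - c')) (B : Set ℝ) :
    tulapMeasure p q c B ≤
      ENNReal.ofReal b⁻¹ * tulapMeasure p q c' B + ENNReal.ofReal ((a' - a) / (1 - q)) := by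
  refine (withDensity_apply_le_mul_add
    ((measurable_tulapPdf hp).comp (measurable_sub_const c')).ennreal_ofReal
    (measurableSet_smoothedCdf_sub_mem hp c a a') (fun t ht => ?_) B).trans
    (add_le_add le_rfl (tulapMeasure_band_le hp0 hp hq c a a'))
  rw [← ENNReal.ofReal_mul (inv_nonneg.2 hb.le)]
  exact ENNReal.ofReal_le_ofReal ((le_inv_mul_iff₀ hb).2 (hcc' t ht))

lemma tulapMeasure_le_of_abs_sub_le_one (hp0 : ∀ l, 0 ≤ p l) (hp : Summable p)
    (hp1 : ∑' l, p l = 1) (hb : 0 < b) (hb1 : b ≤ 1) (hpb : ∀ l, b * p (l + 1) ≤ p l)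
    (hpb' : ∀ l, b * p l ≤ p (l + 1)) (hq : q < 1) {c c' : ℤ} (hcc' : |c - c'| ≤ 1)
    (B : Set ℝ) :
    tulapMeasure p q c B ≤ ENNReal.ofReal b⁻¹ * tulapMeasure p q c' B +
      ENNReal.ofReal ((q / (2 * b) - q / 2) / (1 - q)) := by
  obtain rfl | rfl | rfl : c' = c + 1 ∨ c' = c ∨ c = c' + 1 := by
    have := abs_le.1 hcc'
    omega
  · refine tulapMeasure_le_of_le_off_band hp0 hp hb hq (fun t ht => ?_) B
    have ht' : t - ((c + 1 : ℤ) : ℝ) + 1 = t - c := by push_cast; ring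
    rw [← ht'] at ht ⊢
    exact mul_tulapPdf_add_one_le hp0 hp hb hpb hq.le ht
  · refine le_add_right (le_mul_of_one_le_left (by positivity) ?_)
    exact ENNReal.one_le_ofReal.2 (one_le_inv₀ hb |>.2 hb1)
  · have hwidth : q / (2 * b) - q / 2 = 1 - q / 2 - (1 - q / (2 * b)) := by ring
    rw [hwidth]
    refine tulapMeasure_le_of_le_off_band hp0 hp hb hq (fun t ht => ?_) B
    have ht' : t - ((c' + 1 : ℤ) : ℝ) + 1 = t - c' := by push_cast; ring
    rw [← ht']
    exact mul_tulapPdf_le_add_one hp0 hp hp1 hb hpb' hq.le ht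

end Truncated

end Tulap

open Tulap

theorem stmt_14 {X : Type*} [DecidableEq X] (n : ℕ) (ε δ : ℝ) (hε : 0 < ε) (hδ : 0 ≤ δ)
    (b q : ℝ) (hb : b = Real.exp (-ε)) (hq : q = 2 * δ * b / (1 - b + 2 * δ * b))
    (T : (Fin n → X) → ℤ)
    (hT : ∀ x x' : Fin n → X, hammingDist x x' = 1 → |T x - T x'| ≤ 1)
    (F₀ : ℝ → ℝ)
    (hF₀ : ∀ x : ℝ, F₀ x = ∑' l : ℤ,
      ((1 - b) / (1 + b)) * b ^ l.natAbs * max 0 (min 1 (x - l + 1 / 2)))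
    (dens : ℤ → ℝ → ℝ)
    (hdens : ∀ (c : ℤ) (t : ℝ), dens c t =
      if q / 2 ≤ F₀ (t - (c : ℝ)) ∧ F₀ (t - (c : ℝ)) ≤ 1 - q / 2 then
        ((1 - b) / (1 + b)) * b ^ (round (t - (c : ℝ))).natAbs / (1 - q) else 0)
    (P : ℤ → Measure ℝ)
    (hP : ∀ c : ℤ, P c = volume.withDensity (fun t => ENNReal.ofReal (dens c t))) :
    ∀ x x' : Fin n → X, hammingDist x x' = 1 → ∀ B : Set ℝ, MeasurableSet B →
      (P (T x) B).toReal ≤ Real.exp ε * (P (T x') B).toReal + δ := by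
  intro x x' hxx' B _
  have hb0 : 0 < b := hb ▸ Real.exp_pos _
  have hb1 : b < 1 := hb ▸ Real.exp_lt_one_iff.2 (neg_lt_zero.2 hε)
  have hD : 0 < 1 - b + 2 * δ * b := by nlinarith
  have hq1 : q < 1 := by rw [hq, div_lt_one hD]; linarith
  have hδq : (q / (2 * b) - q / 2) / (1 - q) = δ := by
    have h1q : 1 - q = (1 - b) / (1 - b + 2 * δ * b) := by
      rw [hq]
      field_simp
      ring
    have : 1 - b ≠ 0 := by linarith
    rw [h1q, hq]
    field_simp
  have hF : F₀ = smoothedCdf (dlapWeight b) := funext hF₀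
  have hPc (c : ℤ) : P c = tulapMeasure (dlapWeight b) q c := by
    rw [hP, tulapMeasure]
    simp only [hdens, hF]
    rfl
  have hw := hasSum_dlapWeight hb0.le hb1
  have hw0 := dlapWeight_nonneg hb0.le hb1.le
  rw [hPc, hPc, ← hδq, show Real.exp ε = b⁻¹ by rw [hb, Real.exp_neg, inv_inv]]
  exact ENNReal.toReal_le_mul_add_of_le (inv_nonneg.2 hb0.le) (hδq ▸ hδ)
    (ne_top_of_le_ne_top ENNReal.one_ne_top (tulapMeasure_le_one hw0 hw.summable hq1 _ B))
    (tulapMeasure_le_of_abs_sub_le_one hw0 hw.summable hw.tsum_eq hb0 hb1.le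
      (mul_dlapWeight_add_one_le hb0.le hb1.le) (mul_dlapWeight_le_add_one hb0.le hb1.le) hq1
      (hT x x' hxx') B)
end
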